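/- arXiv:math/0604083 — 7 statements merged into one kernel-verified Lean document; each statement's English description precedes it below -/
import Mathlib

section
/- Let A be an associative algebra over a field K of characteristic zero, and let δ be a K-derivation of A such that δ(x) = 1 for some x ∈ A. Then the kernel of δ is a subalgebra A^δ of A, and for each n ≥ 0 the kernel of δ^{n+1} decomposes as a direct sum: ker(δ^{n+1}) = ⊕_{i=0}^n A^δ · x^i = ⊕_{i=0}^n x^i · A^δ. -/
section Aux

variable {K A : Type*} [Field K] [CharZero K] [Ring A] [Algebra K A]
  (δ : A →ₗ[K] A) (hleib : ∀ a b : A, δ (a * b) = δ a * b + a * δ b)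
  (x : A) (hx : δ x = 1)

include hleib hx

omit hx in
lemma aux_d1 : δ 1 = 0 := by
  have h : δ 1 = δ 1 + δ 1 := by simpa using hleib 1 1
  exact add_eq_left.mp h.symm

end Aux

lemma aux_cancel {K A : Type*} [Field K] [CharZero K] [AddCommGroup A] [Module K A]
    (m : ℕ) (hm : m ≠ 0) (a : A) (h : m • a = 0) : a = 0 := by
  have h' : ((m : K)) • a = 0 := by rw [Nat.cast_smul_eq_nsmul]; exact h
  have hK : (m : K) ≠ 0 := Nat.cast_ne_zero.mpr hm
  calc a = ((m : K)⁻¹ * (m : K)) • a := by rw [inv_mul_cancel₀ hK, one_smul]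
    _ = (m : K)⁻¹ • ((m : K) • a) := by rw [mul_smul]
    _ = 0 := by rw [h', smul_zero]

section Aux

variable {K A : Type*} [Field K] [CharZero K] [Ring A] [Algebra K A]
  (δ : A →ₗ[K] A) (hleib : ∀ a b : A, δ (a * b) = δ a * b + a * δ b)
  (x : A) (hx : δ x = 1)

include hleib hx

lemma aux_dpow (i : ℕ) : δ (x ^ (i + 1)) = (i + 1) • x ^ i := by
  induction i with
  | zero => simpa using hx
  | succ j ih =>
    rw [pow_succ x (j + 1), hleib, ih, hx, mul_one, smul_mul_assoc, ← pow_succ]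
    exact (succ_nsmul _ _).symm

lemma aux_dmul_left (c : A) (hc : δ c = 0) (i : ℕ) :
    δ (c * x ^ (i + 1)) = (i + 1) • (c * x ^ i) := by
  rw [hleib, hc, zero_mul, zero_add, aux_dpow δ hleib x hx, mul_smul_comm]

lemma aux_dmul_right (c : A) (hc : δ c = 0) (i : ℕ) :
    δ (x ^ (i + 1) * c) = (i + 1) • (x ^ i * c) := by
  rw [hleib, hc, mul_zero, add_zero, aux_dpow δ hleib x hx, smul_mul_assoc]

lemma aux_vanish_left : ∀ i n : ℕ, i ≤ n → ∀ c : A, δ c = 0 →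
    (δ ^ (n + 1)) (c * x ^ i) = 0 := by
  intro i
  induction i with
  | zero =>
    intro n _ c hc
    rw [pow_succ, Module.End.mul_apply]
    simp [hc]
  | succ j ih =>
    intro n hn c hc
    obtain ⟨m, rfl⟩ : ∃ m, n = m + 1 := ⟨n - 1, by omega⟩
    rw [pow_succ, Module.End.mul_apply, aux_dmul_left δ hleib x hx c hc, map_nsmul,
      ih m (by omega) c hc, smul_zero]

lemma aux_vanish_right : ∀ i n : ℕ, i ≤ n → ∀ c : A, δ c = 0 →
    (δ ^ (n + 1)) (x ^ i * c) = 0 := by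
  intro i
  induction i with
  | zero =>
    intro n _ c hc
    rw [pow_succ, Module.End.mul_apply]
    simp [hc]
  | succ j ih =>
    intro n hn c hc
    obtain ⟨m, rfl⟩ : ∃ m, n = m + 1 := ⟨n - 1, by omega⟩
    rw [pow_succ, Module.End.mul_apply, aux_dmul_right δ hleib x hx c hc, map_nsmul,
      ih m (by omega) c hc, smul_zero]

lemma aux_inj_left : ∀ n : ℕ, ∀ c : Fin (n + 1) → A, (∀ i, δ (c i) = 0) →
    (∑ i : Fin (n + 1), c i * x ^ (i : ℕ)) = 0 → ∀ i, c i = 0 := by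
  intro n
  induction n with
  | zero =>
    intro c hc hsum i
    fin_cases i
    simpa using hsum
  | succ n ih =>
    intro c hc hsum
    have hd : δ (∑ i : Fin (n + 2), c i * x ^ (i : ℕ)) = 0 := by rw [hsum, map_zero]
    rw [map_sum, Fin.sum_univ_succ] at hd
    simp only [Fin.val_zero, pow_zero, mul_one, hc 0, Fin.val_succ, zero_add] at hd
    have hd' : (∑ i : Fin (n + 1), (((i : ℕ) + 1) • c i.succ) * x ^ (i : ℕ)) = 0 := by
      rw [← hd]
      refine Finset.sum_congr rfl fun i _ => ?_
      rw [aux_dmul_left δ hleib x hx _ (hc i.succ) (i : ℕ), smul_mul_assoc]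
    have hzero : ∀ i : Fin (n + 1), ((i : ℕ) + 1) • c i.succ = 0 :=
      ih (fun i => ((i : ℕ) + 1) • c i.succ)
        (fun i => by rw [map_nsmul, hc i.succ, smul_zero]) hd'
    have hsucc : ∀ i : Fin (n + 1), c i.succ = 0 := fun i =>
      aux_cancel (K := K) ((i : ℕ) + 1) (by omega) _ (hzero i)
    intro i
    refine Fin.cases ?_ hsucc i
    have := hsum
    rw [Fin.sum_univ_succ] at this
    simpa [hsucc] using this

lemma aux_inj_right : ∀ n : ℕ, ∀ c : Fin (n + 1) → A, (∀ i, δ (c i) = 0) →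
    (∑ i : Fin (n + 1), x ^ (i : ℕ) * c i) = 0 → ∀ i, c i = 0 := by
  intro n
  induction n with
  | zero =>
    intro c hc hsum i
    fin_cases i
    simpa using hsum
  | succ n ih =>
    intro c hc hsum
    have hd : δ (∑ i : Fin (n + 2), x ^ (i : ℕ) * c i) = 0 := by rw [hsum, map_zero]
    rw [map_sum, Fin.sum_univ_succ] at hd
    simp only [Fin.val_zero, pow_zero, one_mul, hc 0, Fin.val_succ, zero_add] at hd
    have hd' : (∑ i : Fin (n + 1), x ^ (i : ℕ) * (((i : ℕ) + 1) • c i.succ)) = 0 := by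
      rw [← hd]
      refine Finset.sum_congr rfl fun i _ => ?_
      rw [aux_dmul_right δ hleib x hx _ (hc i.succ) (i : ℕ), mul_smul_comm]
    have hzero : ∀ i : Fin (n + 1), ((i : ℕ) + 1) • c i.succ = 0 :=
      ih (fun i => ((i : ℕ) + 1) • c i.succ)
        (fun i => by rw [map_nsmul, hc i.succ, smul_zero]) hd'
    have hsucc : ∀ i : Fin (n + 1), c i.succ = 0 := fun i =>
      aux_cancel (K := K) ((i : ℕ) + 1) (by omega) _ (hzero i)
    intro i
    refine Fin.cases ?_ hsucc i
    have := hsum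
    rw [Fin.sum_univ_succ] at this
    simpa [hsucc] using this

lemma aux_exists_left : ∀ n : ℕ, ∀ a : A, (δ ^ (n + 1)) a = 0 →
    ∃ c : Fin (n + 1) → A, (∀ i, δ (c i) = 0) ∧
      a = ∑ i : Fin (n + 1), c i * x ^ (i : ℕ) := by
  intro n
  induction n with
  | zero =>
    intro a ha
    exact ⟨fun _ => a, fun i => by simpa using ha, by simp⟩
  | succ n ih =>
    intro a ha
    have hda : (δ ^ (n + 1)) (δ a) = 0 := by
      rw [← Module.End.mul_apply, ← pow_succ]; exact ha
    obtain ⟨d, hd, hda'⟩ := ih (δ a) hda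
    set e : Fin (n + 1) → A := fun i => (((i : ℕ) : K) + 1)⁻¹ • d i with he
    have hne : ∀ i : Fin (n + 1), (((i : ℕ) : K) + 1) ≠ 0 :=
      fun i => Nat.cast_add_one_ne_zero (i : ℕ)
    have hkey : ∀ (i : Fin (n + 1)) (b : A),
        ((i : ℕ) + 1) • ((((i : ℕ) : K) + 1)⁻¹ • b) = b := by
      intro i b
      rw [← Nat.cast_smul_eq_nsmul K, ← smul_assoc]
      push_cast
      rw [smul_eq_mul, mul_inv_cancel₀ (hne i), one_smul]
    have hδe : ∀ i : Fin (n + 1), δ (e i) = 0 := by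
      intro i
      show δ ((((i : ℕ) : K) + 1)⁻¹ • d i) = 0
      rw [map_smul, hd i, smul_zero]
    refine ⟨Fin.cases (a - ∑ i : Fin (n + 1), e i * x ^ ((i : ℕ) + 1)) (fun i => e i),
      ?_, ?_⟩
    · intro i
      refine Fin.cases ?_ (fun j => by simpa using hδe j) i
      simp only [Fin.cases_zero]
      rw [map_sub, map_sum]
      have : ∀ i : Fin (n + 1), δ (e i * x ^ ((i : ℕ) + 1)) = d i * x ^ (i : ℕ) := by
        intro i
        rw [aux_dmul_left δ hleib x hx (e i) (hδe i) (i : ℕ)]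
        show ((i : ℕ) + 1) • ((((i : ℕ) : K) + 1)⁻¹ • d i * x ^ (i : ℕ)) = _
        rw [smul_mul_assoc]
        exact hkey i _
      rw [Finset.sum_congr rfl fun i _ => this i, ← hda', sub_self]
    · rw [Fin.sum_univ_succ]
      simp only [Fin.cases_zero, Fin.cases_succ, Fin.val_zero, pow_zero, mul_one,
        Fin.val_succ]
      abel

lemma aux_exists_right : ∀ n : ℕ, ∀ a : A, (δ ^ (n + 1)) a = 0 →
    ∃ c : Fin (n + 1) → A, (∀ i, δ (c i) = 0) ∧
      a = ∑ i : Fin (n + 1), x ^ (i : ℕ) * c i := by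
  intro n
  induction n with
  | zero =>
    intro a ha
    exact ⟨fun _ => a, fun i => by simpa using ha, by simp⟩
  | succ n ih =>
    intro a ha
    have hda : (δ ^ (n + 1)) (δ a) = 0 := by
      rw [← Module.End.mul_apply, ← pow_succ]; exact ha
    obtain ⟨d, hd, hda'⟩ := ih (δ a) hda
    set e : Fin (n + 1) → A := fun i => (((i : ℕ) : K) + 1)⁻¹ • d i with he
    have hne : ∀ i : Fin (n + 1), (((i : ℕ) : K) + 1) ≠ 0 :=
      fun i => Nat.cast_add_one_ne_zero (i : ℕ)
    have hkey : ∀ (i : Fin (n + 1)) (b : A),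
        ((i : ℕ) + 1) • ((((i : ℕ) : K) + 1)⁻¹ • b) = b := by
      intro i b
      rw [← Nat.cast_smul_eq_nsmul K, ← smul_assoc]
      push_cast
      rw [smul_eq_mul, mul_inv_cancel₀ (hne i), one_smul]
    have hδe : ∀ i : Fin (n + 1), δ (e i) = 0 := by
      intro i
      show δ ((((i : ℕ) : K) + 1)⁻¹ • d i) = 0
      rw [map_smul, hd i, smul_zero]
    refine ⟨Fin.cases (a - ∑ i : Fin (n + 1), x ^ ((i : ℕ) + 1) * e i) (fun i => e i),
      ?_, ?_⟩
    · intro i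
      refine Fin.cases ?_ (fun j => by simpa using hδe j) i
      simp only [Fin.cases_zero]
      rw [map_sub, map_sum]
      have : ∀ i : Fin (n + 1), δ (x ^ ((i : ℕ) + 1) * e i) = x ^ (i : ℕ) * d i := by
        intro i
        rw [aux_dmul_right δ hleib x hx (e i) (hδe i) (i : ℕ)]
        show ((i : ℕ) + 1) • (x ^ (i : ℕ) * (((i : ℕ) : K) + 1)⁻¹ • d i) = _
        rw [mul_smul_comm]
        exact hkey i _
      rw [Finset.sum_congr rfl fun i _ => this i, ← hda', sub_self]
    · rw [Fin.sum_univ_succ]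
      simp only [Fin.cases_zero, Fin.cases_succ, Fin.val_zero, pow_zero, one_mul,
        Fin.val_succ]
      abel

end Aux

/-- if `δ` is a `K`-derivation of an associative `K`-algebra `A`
(char `K` = 0) with `δ x = 1`, then `ker δ` is a subalgebra `A^δ` of `A`, and
for each `n ≥ 0`, `ker (δ^(n+1)) = ⊕_{i=0}^n A^δ · x^i = ⊕_{i=0}^n x^i · A^δ`. -/
theorem stmt0 {K A : Type*} [Field K] [CharZero K] [Ring A] [Algebra K A]
    (δ : A →ₗ[K] A) (hleib : ∀ a b : A, δ (a * b) = δ a * b + a * δ b)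
    (x : A) (hx : δ x = 1) :
    (∃ S : Subalgebra K A, (S : Set A) = {a : A | δ a = 0}) ∧
    (∀ n : ℕ,
      (∀ a : A, (δ ^ (n + 1)) a = 0 →
        (∃! c : Fin (n + 1) → A, (∀ i, δ (c i) = 0) ∧
            a = ∑ i : Fin (n + 1), c i * x ^ (i : ℕ)) ∧
        (∃! c : Fin (n + 1) → A, (∀ i, δ (c i) = 0) ∧
            a = ∑ i : Fin (n + 1), x ^ (i : ℕ) * c i)) ∧
      (∀ c : Fin (n + 1) → A, (∀ i, δ (c i) = 0) →
        (δ ^ (n + 1)) (∑ i : Fin (n + 1), c i * x ^ (i : ℕ)) = 0 ∧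
        (δ ^ (n + 1)) (∑ i : Fin (n + 1), x ^ (i : ℕ) * c i) = 0)) := by
  have h1 : δ 1 = 0 := aux_d1 δ hleib
  constructor
  · refine ⟨{ carrier := {a : A | δ a = 0}
              mul_mem' := ?_
              one_mem' := h1
              add_mem' := ?_
              zero_mem' := map_zero δ
              algebraMap_mem' := ?_ }, rfl⟩
    · intro a b ha hb
      simp only [Set.mem_setOf_eq] at *
      rw [hleib, ha, hb, zero_mul, mul_zero, add_zero]
    · intro a b ha hb
      simp only [Set.mem_setOf_eq] at *
      rw [map_add, ha, hb, add_zero]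
    · intro r
      simp only [Set.mem_setOf_eq, Algebra.algebraMap_eq_smul_one, map_smul, h1,
        smul_zero]
  · intro n
    constructor
    · intro a ha
      constructor
      · obtain ⟨c, hc, hac⟩ := aux_exists_left δ hleib x hx n a ha
        refine ⟨c, ⟨hc, hac⟩, ?_⟩
        intro c' ⟨hc', hac'⟩
        funext i
        have hsum : (∑ i : Fin (n + 1), (c' i - c i) * x ^ (i : ℕ)) = 0 := by
          simp only [sub_mul]
          rw [Finset.sum_sub_distrib, ← hac, ← hac', sub_self]
        have := aux_inj_left δ hleib x hx n (fun i => c' i - c i)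
          (fun i => by rw [map_sub, hc' i, hc i, sub_zero]) hsum i
        exact sub_eq_zero.mp this
      · obtain ⟨c, hc, hac⟩ := aux_exists_right δ hleib x hx n a ha
        refine ⟨c, ⟨hc, hac⟩, ?_⟩
        intro c' ⟨hc', hac'⟩
        funext i
        have hsum : (∑ i : Fin (n + 1), x ^ (i : ℕ) * (c' i - c i)) = 0 := by
          simp only [mul_sub]
          rw [Finset.sum_sub_distrib, ← hac, ← hac', sub_self]
        have := aux_inj_right δ hleib x hx n (fun i => c' i - c i)
          (fun i => by rw [map_sub, hc' i, hc i, sub_zero]) hsum i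
        exact sub_eq_zero.mp this
    · intro c hc
      constructor
      · rw [map_sum]
        refine Finset.sum_eq_zero fun i _ => ?_
        exact aux_vanish_left δ hleib x hx (i : ℕ) n (by omega) (c i) (hc i)
      · rw [map_sum]
        refine Finset.sum_eq_zero fun i _ => ?_
        exact aux_vanish_right δ hleib x hx (i : ℕ) n (by omega) (c i) (hc i)
end

section
/- Let A be an algebra over a field K of characteristic zero, δ a locally nilpotent K-derivation of A with δ(x) = 1 for some central element x ∈ Z(A). Then the map φ := Σ_{i≥0} (-1)^i (x^i/i!) δ^i : A → A is a K-algebra homomorphism. -/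
open Finset

section aux

variable {K A : Type*} [Field K] [CharZero K] [Ring A] [Algebra K A]

lemma stmt3_pow_vanish (δ : A →ₗ[K] A) {a : A} {n : ℕ} (h : (δ ^ n) a = 0) {m : ℕ}
    (hnm : n ≤ m) : (δ ^ m) a = 0 := by
  obtain ⟨k, rfl⟩ := Nat.exists_eq_add_of_le hnm
  rw [add_comm, pow_add, Module.End.mul_apply, h, map_zero]

lemma stmt3_leibniz_iter (δ : A →ₗ[K] A)
    (hleib : ∀ a b : A, δ (a * b) = δ a * b + a * δ b) (a b : A) (n : ℕ) :
    (δ ^ n) (a * b)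
      = ∑ k ∈ range (n + 1), n.choose k • ((δ ^ k) a * (δ ^ (n - k)) b) := by
  induction n with
  | zero => simp
  | succ n ih =>
    have hδ : ∀ (m : ℕ) (c : A), δ ((δ ^ m) c) = (δ ^ (m + 1)) c := by
      intro m c; rw [pow_succ', Module.End.mul_apply]
    rw [← hδ n, ih, map_sum]
    have hterm : ∀ k ∈ range (n + 1),
        δ (n.choose k • ((δ ^ k) a * (δ ^ (n - k)) b))
          = n.choose k • ((δ ^ (k + 1)) a * (δ ^ (n - k)) b)
            + n.choose k • ((δ ^ k) a * (δ ^ (n - k + 1)) b) := by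
      intro k _
      rw [map_nsmul, hleib, smul_add, hδ, hδ]
      -- done
    rw [Finset.sum_congr rfl hterm, Finset.sum_add_distrib]
    rw [Finset.sum_range_succ' (fun k => (n + 1).choose k • ((δ ^ k) a * (δ ^ (n + 1 - k)) b))]
    have e1 : ∀ k ∈ range (n + 1),
        (n + 1).choose (k + 1) • ((δ ^ (k + 1)) a * (δ ^ (n + 1 - (k + 1))) b)
          = n.choose k • ((δ ^ (k + 1)) a * (δ ^ (n - k)) b)
            + n.choose (k + 1) • ((δ ^ (k + 1)) a * (δ ^ (n - k)) b) := by
      intro k _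
      have h1 : n + 1 - (k + 1) = n - k := by omega
      rw [h1, Nat.choose_succ_succ, add_smul]
    rw [Finset.sum_congr rfl e1, Finset.sum_add_distrib, add_assoc]
    congr 1
    rw [Finset.sum_range_succ (fun k => n.choose (k + 1) • ((δ ^ (k + 1)) a * (δ ^ (n - k)) b))]
    rw [Nat.choose_succ_self, zero_smul, add_zero]
    rw [Finset.sum_range_succ' (fun k => n.choose k • ((δ ^ k) a * (δ ^ (n - k + 1)) b))]
    congr 1
    · apply Finset.sum_congr rfl
      intro k hk
      have h2 : n - (k + 1) + 1 = n - k := by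
        simp only [mem_range] at hk; omega
      rw [h2]
    · simp

lemma stmt3_triangle_square {N : ℕ} (T : ℕ → ℕ → A) (hT : ∀ k l, N ≤ k + l → T k l = 0) :
    ∑ i ∈ range N, ∑ k ∈ range (i + 1), T k (i - k)
      = ∑ k ∈ range N, ∑ l ∈ range N, T k l := by
  classical
  rw [← Finset.sum_product' (s := range N) (t := range N) (f := fun k l => T k l)]
  rw [← Finset.sum_filter_of_ne (p := fun p : ℕ × ℕ => p.1 + p.2 < N)
    (by
      intro p _ hp
      by_contra hc
      exact hp (hT p.1 p.2 (by omega)))]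
  rw [Finset.sum_sigma' (range N) (fun i => range (i + 1)) (fun i k => T k (i - k))]
  apply Finset.sum_nbij' (i := fun p : Σ _ : ℕ, ℕ => (p.2, p.1 - p.2))
    (j := fun q : ℕ × ℕ => ⟨q.1 + q.2, q.1⟩)
  · intro p hp
    simp only [Finset.mem_sigma, mem_range] at hp
    simp only [Finset.mem_filter, Finset.mem_product, mem_range]
    omega
  · intro q hq
    simp only [Finset.mem_filter, Finset.mem_product, mem_range] at hq
    simp only [Finset.mem_sigma, mem_range]
    omega
  · intro p hp
    simp only [Finset.mem_sigma, mem_range] at hp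
    have : p.2 + (p.1 - p.2) = p.1 := by omega
    exact Sigma.ext this (by simp)
  · intro q hq
    simp
  · intro p hp
    rfl

end aux

/-- if moreover `x` is central, then
`φ := Σ_{i≥0} (-1)^i (x^i/i!) δ^i : A → A` is a `K`-algebra homomorphism. -/
theorem stmt3 {K A : Type*} [Field K] [CharZero K] [Ring A] [Algebra K A]
    (δ : A →ₗ[K] A) (hleib : ∀ a b : A, δ (a * b) = δ a * b + a * δ b)
    (hln : ∀ a : A, ∃ n : ℕ, (δ ^ n) a = 0)
    (x : A) (hx : δ x = 1) (hcentral : ∀ a : A, x * a = a * x)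
    (φ : A → A)
    (hφ : ∀ (a : A) (N : ℕ), (δ ^ N) a = 0 →
      φ a = ∑ i ∈ Finset.range N,
        ((-1 : K) ^ i * ((Nat.factorial i : K)⁻¹)) • (x ^ i * (δ ^ i) a)) :
    ∃ f : A →ₐ[K] A, ∀ a : A, f a = φ a := by
  have h1 : δ (1 : A) = 0 := by
    have := hleib 1 1
    simp only [mul_one, one_mul] at this
    exact left_eq_add.mp this
  have hpowx : ∀ (l : ℕ) (u : A), x ^ l * u = u * x ^ l := fun l u =>
    (Commute.pow_left (hcentral u) l)
  refine ⟨{ toFun := φ, map_one' := ?_, map_mul' := ?_, map_zero' := ?_,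
            map_add' := ?_, commutes' := ?_ }, fun a => rfl⟩
  · -- map_one
    rw [hφ 1 1 (by rw [pow_one]; exact h1)]
    simp
  · -- map_mul
    intro a b
    obtain ⟨Na, hNa⟩ := hln a
    obtain ⟨Nb, hNb⟩ := hln b
    have ha : (δ ^ (Na + Nb)) a = 0 := stmt3_pow_vanish δ hNa (Nat.le_add_right _ _)
    have hb : (δ ^ (Na + Nb)) b = 0 := stmt3_pow_vanish δ hNb (Nat.le_add_left _ _)
    set N := Na + Nb with hNdef
    have hv : ∀ k l : ℕ, N ≤ k + l → (δ ^ k) a = 0 ∨ (δ ^ l) b = 0 := by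
      intro k l h
      rcases le_or_gt Na k with hk | hk
      · exact Or.inl (stmt3_pow_vanish δ hNa hk)
      · exact Or.inr (stmt3_pow_vanish δ hNb (by omega))
    have hab : (δ ^ N) (a * b) = 0 := by
      rw [stmt3_leibniz_iter δ hleib]
      apply Finset.sum_eq_zero
      intro k hk
      simp only [mem_range] at hk
      rcases hv k (N - k) (by omega) with h | h <;> simp [h]
    set T : ℕ → ℕ → A := fun k l =>
      ((-1 : K) ^ (k + l) * (((k.factorial * l.factorial : ℕ)) : K)⁻¹) •
        (x ^ (k + l) * ((δ ^ k) a * (δ ^ l) b)) with hT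
    have hT0 : ∀ k l, N ≤ k + l → T k l = 0 := by
      intro k l h
      rcases hv k l h with h' | h' <;> simp [hT, h']
    have step1 : φ (a * b) = ∑ i ∈ range N, ∑ k ∈ range (i + 1), T k (i - k) := by
      rw [hφ _ N hab]
      apply Finset.sum_congr rfl
      intro i _
      rw [stmt3_leibniz_iter δ hleib, Finset.mul_sum, Finset.smul_sum]
      apply Finset.sum_congr rfl
      intro k hk
      simp only [mem_range] at hk
      have hki : k ≤ i := by omega
      rw [← Nat.cast_smul_eq_nsmul K, mul_smul_comm, smul_smul]
      simp only [hT]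
      have h2 : k + (i - k) = i := by omega
      rw [h2]
      congr 1
      rw [Nat.cast_choose K hki]
      have f1 : (k.factorial : K) ≠ 0 := Nat.cast_ne_zero.mpr k.factorial_ne_zero
      have f2 : ((i - k).factorial : K) ≠ 0 := Nat.cast_ne_zero.mpr (i - k).factorial_ne_zero
      have f3 : (i.factorial : K) ≠ 0 := Nat.cast_ne_zero.mpr i.factorial_ne_zero
      push_cast
      field_simp
    have step2 : φ a * φ b = ∑ k ∈ range N, ∑ l ∈ range N, T k l := by
      rw [hφ a N ha, hφ b N hb, Finset.sum_mul_sum]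
      apply Finset.sum_congr rfl
      intro k _
      apply Finset.sum_congr rfl
      intro l _
      rw [smul_mul_smul_comm]
      simp only [hT]
      congr 1
      · push_cast [mul_inv]
        ring
      · have hins : (δ ^ k) a * (x ^ l * (δ ^ l) b) = x ^ l * ((δ ^ k) a * (δ ^ l) b) := by
          rw [← mul_assoc, ← hpowx l ((δ ^ k) a), mul_assoc]
        rw [mul_assoc, hins, ← mul_assoc, ← pow_add]
    show φ (a * b) = φ a * φ b
    rw [step1, step2, stmt3_triangle_square T hT0]
  · -- map_zero
    show φ 0 = 0
    rw [hφ 0 0 (by simp)]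
    simp
  · -- map_add
    intro a b
    obtain ⟨Na, hNa⟩ := hln a
    obtain ⟨Nb, hNb⟩ := hln b
    have ha := stmt3_pow_vanish δ hNa (le_max_left Na Nb)
    have hb := stmt3_pow_vanish δ hNb (le_max_right Na Nb)
    show φ (a + b) = φ a + φ b
    rw [hφ a _ ha, hφ b _ hb,
      hφ (a + b) (max Na Nb) (by rw [map_add, ha, hb, add_zero]),
      ← Finset.sum_add_distrib]
    apply Finset.sum_congr rfl
    intro i _
    rw [map_add, mul_add, smul_add]
  · -- commutes
    intro c
    have hc : (δ ^ 1) ((algebraMap K A) c) = 0 := by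
      rw [pow_one, Algebra.algebraMap_eq_smul_one, map_smul, h1, smul_zero]
    show φ ((algebraMap K A) c) = (algebraMap K A) c
    rw [hφ _ 1 hc]
    simp [Algebra.algebraMap_eq_smul_one]
end

section
/- Let A be an algebra over a field K of characteristic zero, δ_1, …, δ_s commuting locally nilpotent K-derivations of A with elements x_1, …, x_s ∈ A satisfying δ_i(x_j) = δ_{ij}. Then A decomposes as a direct sum A = ⊕_{α ∈ ℕ^s} x^α A^δ, where x^α := x_1^{α_1} ⋯ x_s^{α_s} and A^δ := ∩_i ker(δ_i); i.e., every a ∈ A is uniquely a finite sum a = Σ_α x^α λ_α with λ_α ∈ A^δ. -/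
section aux
variable {K A : Type*} [Field K] [Ring A] [Algebra K A]

lemma der_one (d : A →ₗ[K] A) (hl : ∀ a b : A, d (a * b) = d a * b + a * d b) : d 1 = 0 := by
  have := hl 1 1
  simp at this
  linear_combination (norm := abel) this

lemma der_list_zero (d : A →ₗ[K] A) (hl : ∀ a b : A, d (a * b) = d a * b + a * d b) :
    ∀ (l : List A), (∀ a ∈ l, d a = 0) → d l.prod = 0 := by
  intro l
  induction l with
  | nil => intro _; simpa using der_one d hl
  | cons a t ih =>
    intro h
    rw [List.prod_cons, hl, h a (by simp), ih (fun b hb => h b (by simp [hb]))]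
    simp

lemma der_ofFn (d : A →ₗ[K] A) (hl : ∀ a b : A, d (a * b) = d a * b + a * d b) :
    ∀ {n : ℕ} (f : Fin n → A) (i : Fin n), (∀ j, j ≠ i → d (f j) = 0) →
      d (List.ofFn f).prod = (List.ofFn (Function.update f i (d (f i)))).prod := by
  intro n
  induction n with
  | zero => exact fun f i => i.elim0
  | succ n ih =>
    intro f i h
    rw [List.ofFn_succ, List.prod_cons, hl, List.ofFn_succ (f := Function.update f i (d (f i))),
      List.prod_cons]
    induction i using Fin.cases with
    | zero =>
      rw [der_list_zero d hl _ (by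
        intro a ha
        rw [List.mem_ofFn] at ha
        obtain ⟨j, rfl⟩ := ha
        exact h _ (Fin.succ_ne_zero j))]
      have h1 : Function.update f 0 (d (f 0)) 0 = d (f 0) := Function.update_self _ _ _
      have h2 : (fun j : Fin n => Function.update f 0 (d (f 0)) j.succ) = fun j => f j.succ := by
        funext j
        exact Function.update_of_ne (Fin.succ_ne_zero j) _ _
      rw [h1, h2, mul_zero, add_zero]
    | succ i =>
      rw [h 0 (Fin.succ_ne_zero i).symm, zero_mul, zero_add]
      have h2 : (fun j : Fin n => f j.succ) = f ∘ Fin.succ := rfl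
      have h3 := ih (f ∘ Fin.succ) i (fun j hj => h j.succ (by
        intro hc; exact hj (Fin.succ_injective n hc)))
      have h4 : Function.update f i.succ (d (f i.succ)) 0 = f 0 :=
        Function.update_of_ne (Fin.succ_ne_zero i).symm _ _
      have h5 : (fun j : Fin n => Function.update f i.succ (d (f i.succ)) j.succ)
          = Function.update (f ∘ Fin.succ) i (d ((f ∘ Fin.succ) i)) := by
        have := Function.update_comp_eq_of_injective f (Fin.succ_injective n) i (d (f i.succ))
        exact congrArg (fun g => g) this ▸ this
      rw [h4, h5, ← h3]
      rfl

lemma ofFn_update_smul : ∀ {n : ℕ} (f : Fin n → A) (i : Fin n) (m : ℕ) (v : A),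
    (List.ofFn (Function.update f i (m • v))).prod
      = m • (List.ofFn (Function.update f i v)).prod := by
  intro n
  induction n with
  | zero => exact fun f i => i.elim0
  | succ n ih =>
    intro f i m v
    rw [List.ofFn_succ, List.prod_cons, List.ofFn_succ (f := Function.update f i v), List.prod_cons]
    induction i using Fin.cases with
    | zero =>
      have h1 : ∀ (w : A), Function.update f 0 w 0 = w := fun w => Function.update_self _ _ _
      have h2 : ∀ (w : A), (fun j : Fin n => Function.update f 0 w j.succ) = fun j => f j.succ :=
        fun w => funext fun j => Function.update_of_ne (Fin.succ_ne_zero j) _ _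
      rw [h1, h1, h2, h2, smul_mul_assoc]
    | succ i =>
      have h4 : ∀ (w : A), Function.update f i.succ w 0 = f 0 :=
        fun w => Function.update_of_ne (Fin.succ_ne_zero i).symm _ _
      have h5 : ∀ (w : A), (fun j : Fin n => Function.update f i.succ w j.succ)
          = Function.update (f ∘ Fin.succ) i w := by
        intro w
        exact Function.update_comp_eq_of_injective f (Fin.succ_injective n) i w
      rw [h4, h4, h5, h5, ih, mul_smul_comm]

end aux


section aux2
variable {K A : Type*} [Field K] [Ring A] [Algebra K A]

lemma der_pow_zero (d : A →ₗ[K] A) (hl : ∀ a b : A, d (a * b) = d a * b + a * d b)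
    (y : A) (hy : d y = 0) : ∀ n : ℕ, d (y ^ n) = 0 := by
  intro n
  induction n with
  | zero => simpa using (by
      have := hl 1 1; simp at this; linear_combination (norm := abel) this : d 1 = 0)
  | succ n ih => rw [pow_succ, hl, hy, ih]; simp

lemma der_pow_one (d : A →ₗ[K] A) (hl : ∀ a b : A, d (a * b) = d a * b + a * d b)
    (y : A) (hy : d y = 1) : ∀ n : ℕ, d (y ^ n) = n • y ^ (n - 1) := by
  intro n
  induction n with
  | zero =>
    simpa using (by
      have := hl 1 1; simp at this; linear_combination (norm := abel) this : d 1 = 0)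
  | succ n ih =>
    rw [pow_succ, hl, hy, ih, mul_one]
    cases n with
    | zero => simp
    | succ m =>
      simp only [Nat.add_sub_cancel, smul_mul_assoc, ← pow_succ, succ_nsmul, two_smul]
      rw [add_mul, smul_mul_assoc, ← pow_succ]

/-- the monomial `x^α` -/
def Xm {s : ℕ} (x : Fin s → A) (α : Fin s → ℕ) : A := (List.ofFn fun i => x i ^ α i).prod

lemma Xm_zero {s : ℕ} (x : Fin s → A) : Xm x (fun _ => 0) = 1 := by
  unfold Xm
  simp

lemma der_Xm {s : ℕ} (x : Fin s → A) (d : A →ₗ[K] A)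
    (hl : ∀ a b : A, d (a * b) = d a * b + a * d b)
    (i : Fin s) (hdi : d (x i) = 1) (hdj : ∀ j, j ≠ i → d (x j) = 0) (α : Fin s → ℕ) :
    d (Xm x α) = (α i) • Xm x (Function.update α i (α i - 1)) := by
  unfold Xm
  rw [der_ofFn d hl _ i (fun j hj => der_pow_zero d hl _ (hdj j hj) (α j))]
  rw [der_pow_one d hl _ hdi (α i)]
  rw [ofFn_update_smul]
  congr 1
  congr 1
  congr 1
  funext j
  by_cases hj : j = i
  · subst hj
    simp [Function.update_self]
  · simp [Function.update_of_ne hj]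

lemma der_Xm_mul {s : ℕ} (x : Fin s → A) (d : A →ₗ[K] A)
    (hl : ∀ a b : A, d (a * b) = d a * b + a * d b)
    (i : Fin s) (hdi : d (x i) = 1) (hdj : ∀ j, j ≠ i → d (x j) = 0) (α : Fin s → ℕ)
    (lam : A) (hlam : d lam = 0) :
    d (Xm x α * lam) = (α i) • (Xm x (Function.update α i (α i - 1)) * lam) := by
  rw [hl, hlam, mul_zero, add_zero, der_Xm x d hl i hdi hdj, smul_mul_assoc]

end aux2

section aux3
variable {K A : Type*} [Field K] [Ring A] [Algebra K A] {s : ℕ}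

/-- product of `δ i ^ β i` over a finset -/
def Dset (δ : Fin s → (A →ₗ[K] A)) (hc : ∀ i j, Commute (δ i) (δ j))
    (t : Finset (Fin s)) (β : Fin s → ℕ) : A →ₗ[K] A :=
  t.noncommProd (fun i => δ i ^ β i) (fun i _ j _ _ => (hc i j).pow_pow _ _)

def Dm (δ : Fin s → (A →ₗ[K] A)) (hc : ∀ i j, Commute (δ i) (δ j)) (β : Fin s → ℕ) :
    A →ₗ[K] A :=
  Dset δ hc Finset.univ β

variable (δ : Fin s → (A →ₗ[K] A)) (hc : ∀ i j, Commute (δ i) (δ j))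

lemma Dset_insert (t : Finset (Fin s)) (i : Fin s) (hi : i ∉ t) (β : Fin s → ℕ) :
    Dset δ hc (insert i t) β = (δ i ^ β i) * Dset δ hc t β :=
  Finset.noncommProd_insert_of_notMem t i _ _ hi

lemma Dset_congr (t : Finset (Fin s)) (β γ : Fin s → ℕ) (h : ∀ j ∈ t, β j = γ j) :
    Dset δ hc t β = Dset δ hc t γ :=
  Finset.noncommProd_congr rfl (fun j hj => by rw [h j hj]) _

lemma Dset_commute (t : Finset (Fin s)) (β : Fin s → ℕ) (i : Fin s) (m : ℕ) :
    Commute (δ i ^ m) (Dset δ hc t β) :=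
  Finset.noncommProd_commute t _ _ _ (fun j _ => ((hc i j).pow_pow m (β j)))

lemma Dm_peel (β : Fin s → ℕ) (i : Fin s) :
    Dm δ hc β = (δ i ^ β i) * Dset δ hc (Finset.univ.erase i) β := by
  unfold Dm Dset
  rw [← Finset.noncommProd_insert_of_notMem (Finset.univ.erase i) i _
      (fun a _ b _ h => (hc a b).pow_pow _ _) (Finset.notMem_erase i _)]
  exact Finset.noncommProd_congr (Finset.insert_erase (Finset.mem_univ i)).symm
    (fun _ _ => rfl) _

lemma Dm_succ (β : Fin s → ℕ) (i : Fin s) :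
    Dm δ hc (Function.update β i (β i + 1)) = δ i * Dm δ hc β := by
  rw [Dm_peel δ hc β i, Dm_peel δ hc _ i, Function.update_self,
    Dset_congr δ hc _ (Function.update β i (β i + 1)) β
      (fun j hj => Function.update_of_ne (Finset.ne_of_mem_erase hj) _ _),
    pow_succ', mul_assoc]

lemma Dm_zero : Dm δ hc (fun _ => 0) = 1 := by
  unfold Dm Dset
  exact (Finset.noncommProd_eq_pow_card _ _ _ 1 (fun i _ => pow_zero (δ i))).trans (one_pow _)

end aux3

section aux4
variable {K A : Type*} [Field K] [Ring A] [Algebra K A] {s : ℕ}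
variable (δ : Fin s → (A →ₗ[K] A)) (hc : ∀ i j, Commute (δ i) (δ j))
variable (hleib : ∀ i, ∀ a b : A, δ i (a * b) = δ i a * b + a * δ i b)
variable (x : Fin s → A) (hx : ∀ i j, δ i (x j) = if i = j then 1 else 0)

include hleib hx in
lemma pow_delta_Xm (i : Fin s) (k : ℕ) (α : Fin s → ℕ) (lam : A) (hlam : δ i lam = 0) :
    ((δ i) ^ k) (Xm x α * lam)
      = (α i).descFactorial k • (Xm x (Function.update α i (α i - k)) * lam) := by
  induction k with
  | zero =>
    simp [Function.update_eq_self]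
  | succ k ih =>
    rw [pow_succ', Module.End.mul_apply, ih, map_nsmul,
      der_Xm_mul x (δ i) (hleib i) i (by simpa using hx i i)
        (fun j hj => by simpa [Ne.symm hj] using hx i j) _ lam hlam,
      Function.update_self, Function.update_idem, smul_smul,
      Nat.descFactorial_succ, Nat.sub_sub, mul_comm]

include hleib hx in
lemma Dset_Xm (t : Finset (Fin s)) (β α : Fin s → ℕ) (lam : A) (hlam : ∀ i, δ i lam = 0) :
    Dset δ hc t β (Xm x α * lam)
      = (∏ i ∈ t, (α i).descFactorial (β i)) •
          (Xm x (fun j => if j ∈ t then α j - β j else α j) * lam) := by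
  classical
  induction t using Finset.induction with
  | empty =>
    rw [show Dset δ hc ∅ β = 1 from Finset.noncommProd_empty _ _]
    simp
  | @insert i t hi ih =>
    rw [Dset_insert δ hc t i hi, Module.End.mul_apply, ih, map_nsmul,
      pow_delta_Xm δ hleib x hx i (β i) _ lam (hlam i)]
    simp only [if_neg hi]
    have h2 : Function.update (fun j => if j ∈ t then α j - β j else α j) i (α i - β i)
        = fun j => if j ∈ insert i t then α j - β j else α j := by
      funext j
      by_cases hj : j = i
      · subst hj; simp [Function.update_self]
      · simp [Function.update_of_ne hj, hj]
    rw [h2, smul_smul, Finset.prod_insert hi, mul_comm]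

include hleib hx in
lemma Dm_Xm (β α : Fin s → ℕ) (lam : A) (hlam : ∀ i, δ i lam = 0) :
    Dm δ hc β (Xm x α * lam)
      = (∏ i, (α i).descFactorial (β i)) • (Xm x (fun j => α j - β j) * lam) := by
  unfold Dm
  rw [Dset_Xm δ hc hleib x hx Finset.univ β α lam hlam]
  simp

include hleib hx in
lemma Dm_Xm_self (β : Fin s → ℕ) (lam : A) (hlam : ∀ i, δ i lam = 0) :
    Dm δ hc β (Xm x β * lam) = (∏ i, (β i).factorial) • lam := by
  rw [Dm_Xm δ hc hleib x hx β β lam hlam]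
  have h1 : (fun j => β j - β j) = fun _ : Fin s => 0 := by funext j; simp
  rw [h1, Xm_zero, one_mul]
  simp [Nat.descFactorial_self]

include hleib hx in
lemma Dm_Xm_zero (β α : Fin s → ℕ) (lam : A) (hlam : ∀ i, δ i lam = 0)
    (i0 : Fin s) (h : α i0 < β i0) :
    Dm δ hc β (Xm x α * lam) = 0 := by
  rw [Dm_Xm δ hc hleib x hx β α lam hlam,
    Finset.prod_eq_zero (Finset.mem_univ i0) (Nat.descFactorial_eq_zero_iff_lt.2 h), zero_smul]

end aux4

section aux5
variable {K A : Type*} [Field K] [CharZero K] [Ring A] [Algebra K A] {s : ℕ}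
variable (δ : Fin s → (A →ₗ[K] A)) (hc : ∀ i j, Commute (δ i) (δ j))
variable (hleib : ∀ i, ∀ a b : A, δ i (a * b) = δ i a * b + a * δ i b)
variable (x : Fin s → A) (hx : ∀ i j, δ i (x j) = if i = j then 1 else 0)

lemma exists_lt_of_ne (α β : Fin s → ℕ) (hne : α ≠ β) (hs : ∑ i, α i ≤ ∑ i, β i) :
    ∃ i, α i < β i := by
  by_contra hcon
  push_neg at hcon
  have heq : ∀ i, β i = α i := by
    intro i
    by_contra hne2
    have hlt : β i < α i := lt_of_le_of_ne (hcon i) hne2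
    have := Finset.sum_lt_sum (fun j (_ : j ∈ Finset.univ) => hcon j)
      ⟨i, Finset.mem_univ i, hlt⟩
    omega
  exact hne (funext fun i => (heq i).symm)

lemma sum_update_succ (β : Fin s → ℕ) (i : Fin s) :
    ∑ j, Function.update β i (β i + 1) j = (∑ j, β j) + 1 := by
  rw [Finset.sum_update_of_mem (Finset.mem_univ i), ← Finset.erase_eq,
    add_comm (β i) 1, add_assoc, Finset.add_sum_erase _ β (Finset.mem_univ i), add_comm]

include hleib hx in
lemma exist_aux (N : ℕ) : ∀ a : A, (∀ β : Fin s → ℕ, N ≤ ∑ i, β i → Dm δ hc β a = 0) →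
    ∃ c : (Fin s → ℕ) →₀ A, (∀ α i, δ i (c α) = 0) ∧
      a = c.sum fun α lam => Xm x α * lam := by
  induction N with
  | zero =>
    intro a h
    have h0 := h (fun _ => 0) (by simp)
    rw [Dm_zero, Module.End.one_apply] at h0
    refine ⟨0, by simp, ?_⟩
    rw [Finsupp.sum_zero_index, h0]
  | succ N ih =>
    intro a h
    classical
    set S : Finset (Fin s → ℕ) :=
      (Fintype.piFinset fun _ : Fin s => Finset.range (N + 1)).filter
        (fun β => ∑ i, β i = N) with hSdef
    set lamf : (Fin s → ℕ) → A :=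
      fun β => ((∏ i, (β i).factorial : ℕ) : K)⁻¹ • Dm δ hc β a with hlamf
    have hSmem : ∀ β : Fin s → ℕ, (∑ i, β i = N) → β ∈ S := by
      intro β hβ
      rw [hSdef, Finset.mem_filter]
      refine ⟨?_, hβ⟩
      rw [Fintype.mem_piFinset]
      intro i
      rw [Finset.mem_range]
      have : β i ≤ ∑ j, β j := Finset.single_le_sum (fun j _ => Nat.zero_le _) (Finset.mem_univ i)
      omega
    have hSdeg : ∀ β ∈ S, ∑ i, β i = N := fun β hβ => (Finset.mem_filter.1 hβ).2
    have hker : ∀ β : Fin s → ℕ, (∑ i, β i = N) → ∀ i, δ i (lamf β) = 0 := by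
      intro β hβ i
      rw [hlamf]
      simp only
      rw [map_smul]
      have h1 : δ i (Dm δ hc β a) = Dm δ hc (Function.update β i (β i + 1)) a := by
        rw [Dm_succ δ hc β i]; rfl
      rw [h1, h _ (by rw [sum_update_succ, hβ]), smul_zero]
    set b := a - ∑ β ∈ S, Xm x β * lamf β with hbdef
    have hb : ∀ γ : Fin s → ℕ, N ≤ ∑ i, γ i → Dm δ hc γ b = 0 := by
      intro γ hγ
      rw [hbdef, map_sub, map_sum]
      rcases eq_or_lt_of_le hγ with heq | hlt
      · have hγS : γ ∈ S := hSmem γ heq.symm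
        have hterm : ∀ β ∈ S, Dm δ hc γ (Xm x β * lamf β)
            = if β = γ then Dm δ hc γ a else 0 := by
          intro β hβS
          by_cases hbg : β = γ
          · subst hbg
            rw [if_pos rfl, Dm_Xm_self δ hc hleib x hx β (lamf β) (hker β (hSdeg β hβS)), hlamf]
            simp only
            rw [← Nat.cast_smul_eq_nsmul K, smul_smul, mul_inv_cancel₀, one_smul]
            exact Nat.cast_ne_zero.2
              (Finset.prod_ne_zero_iff.2 fun i _ => (Nat.factorial_pos _).ne')
          · rw [if_neg hbg]
            obtain ⟨i0, hi0⟩ := exists_lt_of_ne β γ hbg (by rw [hSdeg β hβS, ← heq])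
            exact Dm_Xm_zero δ hc hleib x hx γ β (lamf β) (hker β (hSdeg β hβS)) i0 hi0
        rw [Finset.sum_congr rfl hterm, Finset.sum_ite_eq' S γ (fun _ => Dm δ hc γ a),
          if_pos hγS, sub_self]
      · have hterm : ∀ β ∈ S, Dm δ hc γ (Xm x β * lamf β) = 0 := by
          intro β hβS
          have hβN := hSdeg β hβS
          obtain ⟨i0, hi0⟩ := exists_lt_of_ne β γ
            (by intro hbg; subst hbg; omega) (by omega)
          exact Dm_Xm_zero δ hc hleib x hx γ β (lamf β) (hker β hβN) i0 hi0
        rw [Finset.sum_congr rfl hterm, Finset.sum_const_zero, h γ hlt, sub_zero]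
    obtain ⟨c₀, hc₀ker, hc₀sum⟩ := ih b hb
    refine ⟨c₀ + ∑ β ∈ S, Finsupp.single β (lamf β), ?_, ?_⟩
    · intro α i
      rw [Finsupp.add_apply, Finsupp.finset_sum_apply, map_add, hc₀ker α i, zero_add, map_sum]
      refine Finset.sum_eq_zero ?_
      intro β hβS
      rw [Finsupp.single_apply]
      by_cases hba : β = α
      · rw [if_pos hba]
        exact hker β (hSdeg β hβS) i
      · rw [if_neg hba, map_zero]
    · rw [Finsupp.sum_add_index' (fun α => mul_zero _) (fun α b1 b2 => mul_add _ _ _), ← hc₀sum,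
        ← Finsupp.sum_finset_sum_index (fun α => mul_zero _) (fun α b1 b2 => mul_add _ _ _)]
      have hss : ∀ β ∈ S, ((Finsupp.single β (lamf β)).sum fun α lam => Xm x α * lam)
          = Xm x β * lamf β := fun β _ => Finsupp.sum_single_index (mul_zero _)
      rw [Finset.sum_congr rfl hss, hbdef, sub_add_cancel]

end aux5

section aux6
variable {K A : Type*} [Field K] [CharZero K] [Ring A] [Algebra K A] {s : ℕ}
variable (δ : Fin s → (A →ₗ[K] A)) (hc : ∀ i j, Commute (δ i) (δ j))
variable (hleib : ∀ i, ∀ a b : A, δ i (a * b) = δ i a * b + a * δ i b)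
variable (x : Fin s → A) (hx : ∀ i j, δ i (x j) = if i = j then 1 else 0)

include hc hleib hx in
lemma uniq_aux (d : (Fin s → ℕ) →₀ A) (hdker : ∀ α i, δ i (d α) = 0)
    (hdsum : (d.sum fun α lam => Xm x α * lam) = 0) : d = 0 := by
  classical
  suffices H : ∀ n : ℕ, (∀ β ∈ d.support, ∑ i, β i < n) → d = 0 by
    refine H (1 + ∑ β ∈ d.support, ∑ i, β i) (fun β hβ => ?_)
    have hle : (∑ i, β i) ≤ ∑ γ ∈ d.support, ∑ i, γ i :=
      Finset.single_le_sum (f := fun γ : Fin s → ℕ => ∑ i, γ i) (fun γ _ => Nat.zero_le _) hβ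
    exact lt_of_le_of_lt hle (lt_one_add _)
  intro n
  induction n with
  | zero =>
    intro hs
    ext β
    simp only [Finsupp.coe_zero, Pi.zero_apply]
    by_contra hne
    exact absurd (hs β (Finsupp.mem_support_iff.2 hne)) (by omega)
  | succ n ihn =>
    intro hs
    have hzero : ∀ β : Fin s → ℕ, ∑ i, β i = n → d β = 0 := by
      intro β hβn
      have h0 : Dm δ hc β (d.sum fun α lam => Xm x α * lam) = 0 := by rw [hdsum, map_zero]
      rw [Finsupp.sum, map_sum] at h0
      rw [Finset.sum_eq_single β
        (fun α hα hne => by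
          obtain ⟨i0, hi0⟩ := exists_lt_of_ne α β hne (by have := hs α hα; omega)
          exact Dm_Xm_zero δ hc hleib x hx β α (d α) (fun i => hdker α i) i0 hi0)
        (fun hβ => by rw [Finsupp.notMem_support_iff.1 hβ, mul_zero, map_zero])] at h0
      rw [Dm_Xm_self δ hc hleib x hx β (d β) (fun i => hdker β i)] at h0
      have hne : ((∏ i, (β i).factorial : ℕ) : K) ≠ 0 :=
        Nat.cast_ne_zero.2 (Finset.prod_ne_zero_iff.2 fun i _ => (Nat.factorial_pos _).ne')
      rw [← Nat.cast_smul_eq_nsmul K] at h0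
      calc d β = ((∏ i, (β i).factorial : ℕ) : K)⁻¹ • (((∏ i, (β i).factorial : ℕ) : K) • d β) := by
            rw [smul_smul, inv_mul_cancel₀ hne, one_smul]
        _ = 0 := by rw [h0, smul_zero]
    refine ihn (fun β hβ => ?_)
    have h1 := hs β hβ
    have h2 : ∑ i, β i ≠ n := fun hn => Finsupp.mem_support_iff.1 hβ (hzero β hn)
    omega

end aux6

/-- `A = ⊕_{α ∈ ℕ^s} x^α A^δ`: every `a ∈ A` is uniquely a finite sum
`a = Σ_α x^α λ_α` with `λ_α ∈ A^δ`, where `x^α := x_1^{α_1} ⋯ x_s^{α_s}`. -/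
theorem stmt6 {K A : Type*} [Field K] [CharZero K] [Ring A] [Algebra K A]
    {s : ℕ} (δ : Fin s → (A →ₗ[K] A))
    (hleib : ∀ i, ∀ a b : A, δ i (a * b) = δ i a * b + a * δ i b)
    (hcomm : ∀ i j, ∀ a : A, δ i (δ j a) = δ j (δ i a))
    (hln : ∀ i, ∀ a : A, ∃ n : ℕ, ((δ i) ^ n) a = 0)
    (x : Fin s → A)
    (hx : ∀ i j, δ i (x j) = if i = j then 1 else 0) :
    ∀ a : A, ∃! c : (Fin s → ℕ) →₀ A,
      (∀ α i, δ i (c α) = 0) ∧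
      a = c.sum fun α lam => (List.ofFn fun i => x i ^ α i).prod * lam := by
  intro a
  classical
  have hc : ∀ i j, Commute (δ i) (δ j) := fun i j => LinearMap.ext fun z => hcomm i j z
  set n : Fin s → ℕ := fun i => (hln i a).choose with hn
  have hna : ∀ i, (δ i ^ n i) a = 0 := fun i => (hln i a).choose_spec
  have hNa : ∀ β : Fin s → ℕ, (1 + ∑ i, n i) ≤ ∑ i, β i → Dm δ hc β a = 0 := by
    intro β hβ
    have hex : ∃ i, n i ≤ β i := by
      by_contra hcon
      push_neg at hcon
      have : ∑ i, β i ≤ ∑ i, n i := Finset.sum_le_sum fun i _ => le_of_lt (hcon i)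
      omega
    obtain ⟨i, hi⟩ := hex
    rw [Dm_peel δ hc β i, (Dset_commute δ hc (Finset.univ.erase i) β i (β i)).eq,
      Module.End.mul_apply, ← Nat.sub_add_cancel hi, pow_add, Module.End.mul_apply, hna i,
      map_zero, map_zero]
  obtain ⟨c, hcker, hcsum⟩ := exist_aux δ hc hleib x hx (1 + ∑ i, n i) a hNa
  refine ⟨c, ⟨hcker, hcsum⟩, ?_⟩
  intro y hy
  have hd := uniq_aux δ hc hleib x hx (y - c)
    (fun α i => by rw [Finsupp.sub_apply, map_sub, hy.1 α i, hcker α i, sub_self])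
    (by rw [Finsupp.sum_sub_index (fun α b1 b2 => mul_sub _ _ _), ← hcsum]
        exact sub_eq_zero.2 hy.2.symm)
  exact sub_eq_zero.1 hd
end

section
/- Let A be an algebra over a field K of characteristic zero with commuting locally nilpotent derivations δ_1, …, δ_s and elements x_1, …, x_s such that δ_i(x_j) = δ_{ij}. Then each x_i is neither a left nor a right zero divisor in A. -/
/-- each `x i` is neither a left nor a right zero divisor in `A`. -/
theorem stmt8 {K A : Type*} [Field K] [CharZero K] [Ring A] [Algebra K A]
    {s : ℕ} (δ : Fin s → (A →ₗ[K] A))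
    (hleib : ∀ i, ∀ a b : A, δ i (a * b) = δ i a * b + a * δ i b)
    (hcomm : ∀ i j, ∀ a : A, δ i (δ j a) = δ j (δ i a))
    (hln : ∀ i, ∀ a : A, ∃ n : ℕ, ((δ i) ^ n) a = 0)
    (x : Fin s → A)
    (hx : ∀ i j, δ i (x j) = if i = j then 1 else 0) :
    ∀ i, ∀ a : A, (x i * a = 0 → a = 0) ∧ (a * x i = 0 → a = 0) := by
  classical
  intro i a
  set d := δ i with hd
  have hdx : d (x i) = 1 := by simp [hd, hx]
  have hleibd : ∀ a b : A, d (a * b) = d a * b + a * d b := hleib i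
  have hstep : ∀ (n : ℕ) (c : A), (d ^ (n + 1)) c = d ((d ^ n) c) := by
    intro n c
    rw [pow_succ']
    rfl
  have key1 : ∀ n : ℕ, ∀ b : A,
      (d ^ (n + 1)) (x i * b) = x i * (d ^ (n + 1)) b + (n + 1) • (d ^ n) b := by
    intro n
    induction n with
    | zero =>
        intro b
        simp only [zero_add, pow_one, pow_zero, one_smul, Module.End.one_apply, hleibd,
          hdx, one_mul]
        abel
    | succ n ih =>
        intro b
        rw [hstep (n + 1), ih b, map_add, map_nsmul, hleibd, hdx, one_mul,
          ← hstep (n + 1), ← hstep n]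
        simp only [add_nsmul, one_nsmul]
        abel
  have key2 : ∀ n : ℕ, ∀ b : A,
      (d ^ (n + 1)) (b * x i) = (d ^ (n + 1)) b * x i + (n + 1) • (d ^ n) b := by
    intro n
    induction n with
    | zero =>
        intro b
        simp only [zero_add, pow_one, pow_zero, one_smul, Module.End.one_apply, hleibd,
          hdx, mul_one]
    | succ n ih =>
        intro b
        rw [hstep (n + 1), ih b, map_add, map_nsmul, hleibd, hdx, mul_one,
          ← hstep (n + 1), ← hstep n]
        simp only [add_nsmul, one_nsmul]
        abel
  have main : ∀ b : A, b ≠ 0 → ∃ m : ℕ, (d ^ m) b ≠ 0 ∧ (d ^ (m + 1)) b = 0 := by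
    intro b hb
    have hex : ∃ n : ℕ, (d ^ n) b = 0 := hln i b
    have hspec := Nat.find_spec hex
    have npos : Nat.find hex ≠ 0 := by
      intro h
      rw [h, pow_zero] at hspec
      exact hb hspec
    obtain ⟨m, hm⟩ := Nat.exists_eq_succ_of_ne_zero npos
    refine ⟨m, Nat.find_min hex (by omega), ?_⟩
    rw [← Nat.succ_eq_add_one, ← hm]; exact hspec
  have kill : ∀ (m : ℕ) (b : A), (m + 1) • b = 0 → b = 0 := by
    intro m b hb
    have h1 : ((m + 1 : ℕ) : K) • b = 0 := by
      rw [Nat.cast_smul_eq_nsmul]; exact hb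
    have h2 : ((m + 1 : ℕ) : K) ≠ 0 := by
      exact_mod_cast Nat.succ_ne_zero m
    rcases smul_eq_zero.mp h1 with h | h
    · exact absurd h h2
    · exact h
  constructor
  · intro h0
    by_contra ha
    obtain ⟨m, hm, hm1⟩ := main a ha
    have := key1 m a
    rw [h0, map_zero, hm1, mul_zero, zero_add] at this
    exact hm (kill m _ this.symm)
  · intro h0
    by_contra ha
    obtain ⟨m, hm, hm1⟩ := main a ha
    have := key2 m a
    rw [h0, map_zero, hm1, zero_mul, zero_add] at this
    exact hm (kill m _ this.symm)
end

section
/- Let A be an algebra over K (char 0) with commuting locally nilpotent derivations δ_1, …, δ_s and elements x_1, …, x_s satisfying δ_i(x_j) = δ_{ij}, and suppose additionally that all x_i are central in A. Then A is generated as a K-algebra by A^δ ∪ {x_1, …, x_s}, the x_i are algebraically independent over A^δ, and the ideal (x_1, …, x_s) of A satisfies A/(x_1, …, x_s) ≅ A^δ as K-algebras. -/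
open Finset

set_option linter.unusedSectionVars false
attribute [local instance] Classical.propDecidable
set_option maxHeartbeats 1000000

section Stmt9Aux
variable {K A : Type*} [Field K] [CharZero K] [Ring A] [Algebra K A]
variable {s : ℕ}

lemma s9_d_one (δ : Fin s → (A →ₗ[K] A))
    (hleib : ∀ i, ∀ a b : A, δ i (a * b) = δ i a * b + a * δ i b) (i : Fin s) :
    δ i 1 = 0 := by
  have h := hleib i 1 1
  simpa using h

lemma s9_pow_comm (δ : Fin s → (A →ₗ[K] A))
    (hcomm : ∀ i j, ∀ a : A, δ i (δ j a) = δ j (δ i a)) (i j : Fin s) (n : ℕ) (a : A) :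
    (δ i ^ n) (δ j a) = δ j ((δ i ^ n) a) := by
  induction n with
  | zero => simp
  | succ n ih =>
    rw [pow_succ', Module.End.mul_apply, Module.End.mul_apply, ih, hcomm i j]

/-- iterated Leibniz -/
lemma s9_leib_pow (δ : Fin s → (A →ₗ[K] A))
    (hleib : ∀ i, ∀ a b : A, δ i (a * b) = δ i a * b + a * δ i b) (i : Fin s)
    (n : ℕ) (a b : A) :
    (δ i ^ n) (a * b)
      = ∑ k ∈ Finset.range (n + 1), n.choose k • ((δ i ^ k) a * (δ i ^ (n - k)) b) := by
  induction n with
  | zero => simp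
  | succ n ih =>
    rw [pow_succ', Module.End.mul_apply, ih, map_sum]
    have hterm : ∀ k ∈ Finset.range (n + 1),
        δ i (n.choose k • ((δ i ^ k) a * (δ i ^ (n - k)) b))
          = n.choose k • ((δ i ^ (k+1)) a * (δ i ^ (n - k)) b)
            + n.choose k • ((δ i ^ k) a * (δ i ^ (n - k + 1)) b) := by
      intro k _
      rw [map_nsmul, hleib i, smul_add]
      congr 2
      · rw [pow_succ', Module.End.mul_apply]
      · rw [pow_succ', Module.End.mul_apply]
    rw [Finset.sum_congr rfl hterm, Finset.sum_add_distrib]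
    have h1 : ∑ k ∈ Finset.range (n + 1), n.choose k • ((δ i ^ (k+1)) a * (δ i ^ (n - k)) b)
        = ∑ k ∈ Finset.range (n + 2), (if k = 0 then 0 else n.choose (k-1)) •
            ((δ i ^ k) a * (δ i ^ (n + 1 - k)) b) := by
      rw [Finset.sum_range_succ' (fun k => (if k = 0 then 0 else n.choose (k-1)) •
            ((δ i ^ k) a * (δ i ^ (n + 1 - k)) b)) (n+1)]
      simp [Nat.succ_sub_succ]
    have h2 : ∑ k ∈ Finset.range (n + 1), n.choose k • ((δ i ^ k) a * (δ i ^ (n - k + 1)) b)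
        = ∑ k ∈ Finset.range (n + 2), (if k = n + 1 then 0 else n.choose k) •
            ((δ i ^ k) a * (δ i ^ (n + 1 - k)) b) := by
      conv_rhs => rw [Finset.sum_range_succ]
      rw [if_pos rfl, zero_smul, add_zero]
      apply Finset.sum_congr rfl
      intro k hk
      rw [Finset.mem_range] at hk
      rw [if_neg (by omega), show n - k + 1 = n + 1 - k by omega]
    rw [h1, h2, ← Finset.sum_add_distrib]
    apply Finset.sum_congr rfl
    intro k hk
    rw [Finset.mem_range] at hk
    rw [← add_smul]
    congr 1
    match k with
    | 0 => simp
    | (j+1) =>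
      rcases eq_or_ne j n with h' | h'
      · subst h'; simp [Nat.choose_succ_self_right]
      · rw [if_neg (Nat.succ_ne_zero j), if_neg (by omega), Nat.succ_sub_one,
          Nat.choose_succ_succ']

/-- the minimal `n` with `δ i ^ n a = 0`. -/
noncomputable def s9nil (δ : Fin s → (A →ₗ[K] A))
    (hln : ∀ i, ∀ a : A, ∃ n : ℕ, ((δ i) ^ n) a = 0) (i : Fin s) (a : A) : ℕ :=
  Nat.find (hln i a)

lemma s9nil_spec (δ : Fin s → (A →ₗ[K] A))
    (hln : ∀ i, ∀ a : A, ∃ n : ℕ, ((δ i) ^ n) a = 0) (i : Fin s) (a : A) :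
    (δ i ^ s9nil δ hln i a) a = 0 := Nat.find_spec (hln i a)

lemma s9nil_le (δ : Fin s → (A →ₗ[K] A))
    (hln : ∀ i, ∀ a : A, ∃ n : ℕ, ((δ i) ^ n) a = 0) (i : Fin s) (a : A) {n : ℕ}
    (h : (δ i ^ n) a = 0) : s9nil δ hln i a ≤ n := Nat.find_le h

lemma s9_dpow_zero_of_le (δ : Fin s → (A →ₗ[K] A))
    (hln : ∀ i, ∀ a : A, ∃ n : ℕ, ((δ i) ^ n) a = 0) (i : Fin s) (a : A) {n : ℕ}
    (h : s9nil δ hln i a ≤ n) : (δ i ^ n) a = 0 := by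
  have h2 : (δ i ^ n) a = (δ i ^ (n - s9nil δ hln i a)) ((δ i ^ s9nil δ hln i a) a) := by
    have h3 : n - s9nil δ hln i a + s9nil δ hln i a = n := by omega
    rw [← Module.End.mul_apply, ← pow_add, h3]
  rw [h2, s9nil_spec, map_zero]

/-- truncated exponential `∑_{k<M} (-1)^k/k! x_i^k δ_i^k a`. -/
noncomputable def s9P (δ : Fin s → (A →ₗ[K] A)) (x : Fin s → A) (i : Fin s) (M : ℕ) (a : A) : A :=
  ∑ k ∈ Finset.range M, (((-1 : K) ^ k) * ((k.factorial : K))⁻¹) • (x i ^ k * (δ i ^ k) a)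

noncomputable def s9pi (δ : Fin s → (A →ₗ[K] A)) (x : Fin s → A)
    (hln : ∀ i, ∀ a : A, ∃ n : ℕ, ((δ i) ^ n) a = 0) (i : Fin s) (a : A) : A :=
  s9P δ x i (s9nil δ hln i a) a

lemma s9pi_eq_P (δ : Fin s → (A →ₗ[K] A)) (x : Fin s → A)
    (hln : ∀ i, ∀ a : A, ∃ n : ℕ, ((δ i) ^ n) a = 0) (i : Fin s) (a : A) {M : ℕ}
    (h : s9nil δ hln i a ≤ M) : s9pi δ x hln i a = s9P δ x i M a := by
  unfold s9pi s9P
  apply Finset.sum_subset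
  · exact Finset.range_subset_range.2 h
  · intro k _ hk
    rw [Finset.mem_range, not_lt] at hk
    rw [s9_dpow_zero_of_le δ hln i a hk, mul_zero, smul_zero]

/-- grid-to-antidiagonal reindexing -/
lemma s9_grid {M : ℕ} (f : ℕ → ℕ → A) (hf : ∀ k l, M ≤ k + l → f k l = 0) :
    ∑ k ∈ Finset.range M, ∑ l ∈ Finset.range M, f k l
      = ∑ m ∈ Finset.range M, ∑ k ∈ Finset.range (m + 1), f k (m - k) := by
  rw [Finset.sum_sigma', Finset.sum_sigma']
  rw [← Finset.sum_filter_add_sum_filter_not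
    ((Finset.range M).sigma fun _ => Finset.range M) (fun p => p.1 + p.2 < M)]
  have hzero : ∑ p ∈ ((Finset.range M).sigma fun _ => Finset.range M).filter
      (fun p => ¬ (p.1 + p.2 < M)), f p.1 p.2 = 0 := by
    apply Finset.sum_eq_zero
    intro p hp
    rw [Finset.mem_filter] at hp
    exact hf p.1 p.2 (not_lt.mp hp.2)
  rw [hzero, add_zero]
  apply Finset.sum_nbij' (i := fun p => (⟨p.1 + p.2, p.1⟩ : (_ : ℕ) × ℕ))
    (j := fun q => (⟨q.2, q.1 - q.2⟩ : (_ : ℕ) × ℕ))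
  · intro p hp
    simp only [Finset.mem_filter, Finset.mem_sigma, Finset.mem_range] at hp ⊢
    omega
  · intro q hq
    simp only [Finset.mem_filter, Finset.mem_sigma, Finset.mem_range] at hq ⊢
    omega
  · intro p hp
    simp only [Finset.mem_filter, Finset.mem_sigma, Finset.mem_range] at hp
    simp only [Nat.add_sub_cancel_left]
  · intro q hq
    simp only [Finset.mem_filter, Finset.mem_sigma, Finset.mem_range] at hq
    have : q.2 + (q.1 - q.2) = q.1 := by omega
    simp [this]
  · intro p hp
    simp only [Nat.add_sub_cancel_left]


-- chunk 3: derivatives of powers of x, nil inequalities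
variable {K A : Type*} [Field K] [CharZero K] [Ring A] [Algebra K A]
variable {s : ℕ}

lemma s9_dx_pow_ne (δ : Fin s → (A →ₗ[K] A)) (x : Fin s → A)
    (hleib : ∀ i, ∀ a b : A, δ i (a * b) = δ i a * b + a * δ i b)
    {i j : Fin s} (h : δ j (x i) = 0) (k : ℕ) : δ j (x i ^ k) = 0 := by
  induction k with
  | zero => simpa using s9_d_one δ hleib j
  | succ k ih =>
    rw [pow_succ, hleib, ih, h, zero_mul, mul_zero, add_zero]

lemma s9_dx_pow_self (δ : Fin s → (A →ₗ[K] A)) (x : Fin s → A)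
    (hleib : ∀ i, ∀ a b : A, δ i (a * b) = δ i a * b + a * δ i b)
    {i : Fin s} (h : δ i (x i) = 1) (k : ℕ) : δ i (x i ^ k) = k • x i ^ (k - 1) := by
  induction k with
  | zero => simpa using s9_d_one δ hleib i
  | succ k ih =>
    rw [pow_succ, hleib, ih, h, mul_one]
    match k with
    | 0 => simp
    | (k+1) =>
      rw [Nat.add_sub_cancel, Nat.add_sub_cancel, smul_mul_assoc, ← pow_succ]
      exact (succ_nsmul _ _).symm

-- nil inequalities
lemma s9nil_d_le (δ : Fin s → (A →ₗ[K] A))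
    (hcomm : ∀ i j, ∀ a : A, δ i (δ j a) = δ j (δ i a))
    (hln : ∀ i, ∀ a : A, ∃ n : ℕ, ((δ i) ^ n) a = 0) (i j : Fin s) (a : A) :
    s9nil δ hln i (δ j a) ≤ s9nil δ hln i a := by
  apply s9nil_le
  rw [s9_pow_comm δ hcomm, s9nil_spec, map_zero]

lemma s9nil_dpow_le (δ : Fin s → (A →ₗ[K] A))
    (hcomm : ∀ i j, ∀ a : A, δ i (δ j a) = δ j (δ i a))
    (hln : ∀ i, ∀ a : A, ∃ n : ℕ, ((δ i) ^ n) a = 0) (i j : Fin s) (n : ℕ) (a : A) :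
    s9nil δ hln i ((δ j ^ n) a) ≤ s9nil δ hln i a := by
  induction n generalizing a with
  | zero => simp
  | succ n ih =>
    rw [pow_succ, Module.End.mul_apply]
    exact le_trans (ih (δ j a)) (s9nil_d_le δ hcomm hln i j a)

-- chunk 4a: simple pi properties
variable {K A : Type*} [Field K] [CharZero K] [Ring A] [Algebra K A]
variable {s : ℕ}

lemma s9_central_pow (x : Fin s → A) (hcentral : ∀ i, ∀ a : A, x i * a = a * x i)
    (i : Fin s) (k : ℕ) (a : A) : x i ^ k * a = a * x i ^ k := by
  induction k with
  | zero => simp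
  | succ k ih => rw [pow_succ, mul_assoc, hcentral, ← mul_assoc, ih, mul_assoc]

lemma s9nil_add_le (δ : Fin s → (A →ₗ[K] A))
    (hln : ∀ i, ∀ a : A, ∃ n : ℕ, ((δ i) ^ n) a = 0) (i : Fin s) (a b : A) :
    s9nil δ hln i (a + b) ≤ max (s9nil δ hln i a) (s9nil δ hln i b) := by
  apply s9nil_le
  rw [map_add, s9_dpow_zero_of_le δ hln i a (le_max_left _ _),
    s9_dpow_zero_of_le δ hln i b (le_max_right _ _), add_zero]

lemma s9nil_smul_le (δ : Fin s → (A →ₗ[K] A))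
    (hln : ∀ i, ∀ a : A, ∃ n : ℕ, ((δ i) ^ n) a = 0) (i : Fin s) (c : K) (a : A) :
    s9nil δ hln i (c • a) ≤ s9nil δ hln i a := by
  apply s9nil_le
  rw [map_smul, s9nil_spec, smul_zero]

lemma s9pi_add (δ : Fin s → (A →ₗ[K] A)) (x : Fin s → A)
    (hln : ∀ i, ∀ a : A, ∃ n : ℕ, ((δ i) ^ n) a = 0) (i : Fin s) (a b : A) :
    s9pi δ x hln i (a + b) = s9pi δ x hln i a + s9pi δ x hln i b := by
  set M := max (s9nil δ hln i a) (s9nil δ hln i b) with hM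
  rw [s9pi_eq_P δ x hln i a (le_max_left _ _), s9pi_eq_P δ x hln i b (le_max_right _ _),
    s9pi_eq_P δ x hln i (a + b) (s9nil_add_le δ hln i a b)]
  unfold s9P
  rw [← Finset.sum_add_distrib]
  apply Finset.sum_congr rfl
  intro k _
  rw [map_add, mul_add, smul_add]

lemma s9pi_smul (δ : Fin s → (A →ₗ[K] A)) (x : Fin s → A)
    (hln : ∀ i, ∀ a : A, ∃ n : ℕ, ((δ i) ^ n) a = 0) (i : Fin s) (c : K) (a : A) :
    s9pi δ x hln i (c • a) = c • s9pi δ x hln i a := by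
  rw [s9pi_eq_P δ x hln i (c • a) (s9nil_smul_le δ hln i c a),
    s9pi_eq_P δ x hln i a (le_refl _)]
  unfold s9P
  rw [Finset.smul_sum]
  apply Finset.sum_congr rfl
  intro k _
  rw [map_smul, mul_smul_comm, smul_comm]

lemma s9pi_zero (δ : Fin s → (A →ₗ[K] A)) (x : Fin s → A)
    (hln : ∀ i, ∀ a : A, ∃ n : ℕ, ((δ i) ^ n) a = 0) (i : Fin s) :
    s9pi δ x hln i 0 = 0 := by
  have h0 : s9nil δ hln i (0 : A) ≤ 0 := s9nil_le δ hln i 0 (by simp)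
  rw [s9pi_eq_P δ x hln i 0 h0]
  simp [s9P]

lemma s9pi_of_ker (δ : Fin s → (A →ₗ[K] A)) (x : Fin s → A)
    (hln : ∀ i, ∀ a : A, ∃ n : ℕ, ((δ i) ^ n) a = 0) (i : Fin s) (a : A)
    (h : δ i a = 0) : s9pi δ x hln i a = a := by
  have h1 : s9nil δ hln i a ≤ 1 := s9nil_le δ hln i a (by simpa using h)
  rw [s9pi_eq_P δ x hln i a h1]
  simp [s9P]

lemma s9pi_one (δ : Fin s → (A →ₗ[K] A)) (x : Fin s → A)
    (hleib : ∀ i, ∀ a b : A, δ i (a * b) = δ i a * b + a * δ i b)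
    (hln : ∀ i, ∀ a : A, ∃ n : ℕ, ((δ i) ^ n) a = 0) (i : Fin s) :
    s9pi δ x hln i 1 = 1 :=
  s9pi_of_ker δ x hln i 1 (s9_d_one δ hleib i)

lemma s9pi_x_self (δ : Fin s → (A →ₗ[K] A)) (x : Fin s → A)
    (hln : ∀ i, ∀ a : A, ∃ n : ℕ, ((δ i) ^ n) a = 0) (i : Fin s)
    (h : δ i (x i) = 1) (hone : δ i (1 : A) = 0) : s9pi δ x hln i (x i) = 0 := by
  have h2 : s9nil δ hln i (x i) ≤ 2 := by
    apply s9nil_le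
    rw [pow_succ, Module.End.mul_apply, h]
    simpa using hone
  rw [s9pi_eq_P δ x hln i (x i) h2]
  unfold s9P
  rw [Finset.sum_range_succ, Finset.sum_range_one]
  simp [h]

lemma s9pi_x_ne (δ : Fin s → (A →ₗ[K] A)) (x : Fin s → A)
    (hln : ∀ i, ∀ a : A, ∃ n : ℕ, ((δ i) ^ n) a = 0) {i j : Fin s}
    (h : δ i (x j) = 0) : s9pi δ x hln i (x j) = x j :=
  s9pi_of_ker δ x hln i (x j) h

lemma s9_d_pi_comm (δ : Fin s → (A →ₗ[K] A)) (x : Fin s → A)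
    (hleib : ∀ i, ∀ a b : A, δ i (a * b) = δ i a * b + a * δ i b)
    (hcomm : ∀ i j, ∀ a : A, δ i (δ j a) = δ j (δ i a))
    (hln : ∀ i, ∀ a : A, ∃ n : ℕ, ((δ i) ^ n) a = 0) {i j : Fin s} (hne : j ≠ i)
    (hxji : δ j (x i) = 0) (a : A) :
    δ j (s9pi δ x hln i a) = s9pi δ x hln i (δ j a) := by
  rw [s9pi_eq_P δ x hln i (δ j a) (s9nil_d_le δ hcomm hln i j a)]
  unfold s9pi s9P
  rw [map_sum]
  apply Finset.sum_congr rfl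
  intro k _
  rw [map_smul, hleib j, s9_dx_pow_ne δ x hleib hxji k, zero_mul, zero_add,
    ← s9_pow_comm δ hcomm i j k a]

lemma s9_dpow_pi_comm (δ : Fin s → (A →ₗ[K] A)) (x : Fin s → A)
    (hleib : ∀ i, ∀ a b : A, δ i (a * b) = δ i a * b + a * δ i b)
    (hcomm : ∀ i j, ∀ a : A, δ i (δ j a) = δ j (δ i a))
    (hln : ∀ i, ∀ a : A, ∃ n : ℕ, ((δ i) ^ n) a = 0) {i j : Fin s} (hne : j ≠ i)
    (hxji : δ j (x i) = 0) (n : ℕ) (a : A) :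
    (δ j ^ n) (s9pi δ x hln i a) = s9pi δ x hln i ((δ j ^ n) a) := by
  induction n generalizing a with
  | zero => simp
  | succ n ih =>
    rw [pow_succ, Module.End.mul_apply, Module.End.mul_apply,
      s9_d_pi_comm δ x hleib hcomm hln hne hxji a, ih (δ j a)]

lemma s9nil_pi_le (δ : Fin s → (A →ₗ[K] A)) (x : Fin s → A)
    (hleib : ∀ i, ∀ a b : A, δ i (a * b) = δ i a * b + a * δ i b)
    (hcomm : ∀ i j, ∀ a : A, δ i (δ j a) = δ j (δ i a))
    (hln : ∀ i, ∀ a : A, ∃ n : ℕ, ((δ i) ^ n) a = 0) {i j : Fin s} (hne : j ≠ i)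
    (hxji : δ j (x i) = 0) (a : A) :
    s9nil δ hln j (s9pi δ x hln i a) ≤ s9nil δ hln j a := by
  apply s9nil_le
  rw [s9_dpow_pi_comm δ x hleib hcomm hln hne hxji _ a, s9nil_spec,
    s9pi_zero δ x hln i]

-- chunk 4b: δ i (π i a) = 0
lemma s9_coeff_id (M : ℕ) :
    ((-1 : K) ^ (M+1) * (((M+1).factorial : K))⁻¹) * ((M : K) + 1)
      = -((-1 : K) ^ M * ((M.factorial : K))⁻¹) := by
  have h1 : ((M.factorial : K)) ≠ 0 := Nat.cast_ne_zero.2 (Nat.factorial_ne_zero M)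
  have h2 : ((M : K) + 1) ≠ 0 := by
    have := Nat.cast_ne_zero (R := K) (n := M + 1) |>.2 (Nat.succ_ne_zero M)
    push_cast at this
    exact this
  rw [Nat.factorial_succ]
  push_cast
  field_simp
  ring

lemma s9_d_P (δ : Fin s → (A →ₗ[K] A)) (x : Fin s → A)
    (hleib : ∀ i, ∀ a b : A, δ i (a * b) = δ i a * b + a * δ i b)
    (i : Fin s) (hxi : δ i (x i) = 1) (a : A) (M : ℕ) :
    δ i (s9P δ x i (M+1) a)
      = ((-1 : K) ^ M * ((M.factorial : K))⁻¹) • (x i ^ M * (δ i ^ (M+1)) a) := by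
  induction M with
  | zero =>
    unfold s9P
    simp
  | succ M ih =>
    unfold s9P
    rw [Finset.sum_range_succ (n := M + 1), map_add]
    have := ih
    unfold s9P at this
    rw [this, map_smul, hleib i, s9_dx_pow_self δ x hleib hxi (M+1), Nat.add_sub_cancel]
    have hsm : ((M+1) • x i ^ M) * (δ i ^ (M+1)) a
        = ((M : K) + 1) • (x i ^ M * (δ i ^ (M+1)) a) := by
      rw [smul_mul_assoc, ← Nat.cast_smul_eq_nsmul K]
      push_cast
      ring_nf
    rw [hsm, smul_add, smul_smul, s9_coeff_id, neg_smul, ← add_assoc, add_neg_cancel,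
      zero_add]
    congr 1
    rw [← Module.End.mul_apply, ← pow_succ']

lemma s9_d_pi_self (δ : Fin s → (A →ₗ[K] A)) (x : Fin s → A)
    (hln : ∀ i, ∀ a : A, ∃ n : ℕ, ((δ i) ^ n) a = 0)
    (hleib : ∀ i, ∀ a b : A, δ i (a * b) = δ i a * b + a * δ i b)
    (i : Fin s) (hxi : δ i (x i) = 1) (a : A) :
    δ i (s9pi δ x hln i a) = 0 := by
  rcases Nat.eq_zero_or_eq_succ_pred (s9nil δ hln i a) with h | h
  · unfold s9pi
    rw [h]
    simp [s9P]
  · unfold s9pi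
    rw [h, s9_d_P δ x hleib i hxi a _, s9_dpow_zero_of_le δ hln i a (by omega),
      mul_zero, smul_zero]

lemma s9nil_pi_self_le (δ : Fin s → (A →ₗ[K] A)) (x : Fin s → A)
    (hln : ∀ i, ∀ a : A, ∃ n : ℕ, ((δ i) ^ n) a = 0)
    (hleib : ∀ i, ∀ a b : A, δ i (a * b) = δ i a * b + a * δ i b)
    (i : Fin s) (hxi : δ i (x i) = 1) (a : A) :
    s9nil δ hln i (s9pi δ x hln i a) ≤ 1 := by
  apply s9nil_le
  simpa using s9_d_pi_self δ x hln hleib i hxi a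

-- chunk 4c: pi is multiplicative
lemma s9_coeff_mul {m k : ℕ} (hk : k ≤ m) :
    ((-1 : K) ^ m * ((m.factorial : K))⁻¹) * (m.choose k : K)
      = ((-1 : K) ^ k * ((k.factorial : K))⁻¹)
        * ((-1 : K) ^ (m - k) * (((m - k).factorial : K))⁻¹) := by
  have hsign : (-1 : K) ^ k * (-1 : K) ^ (m - k) = (-1 : K) ^ m := by
    rw [← pow_add]
    congr 1
    omega
  have hfact : (m.choose k : K) * (k.factorial : K) * ((m - k).factorial : K)
      = (m.factorial : K) := by
    rw [← Nat.cast_mul, ← Nat.cast_mul, Nat.choose_mul_factorial_mul_factorial hk]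
  have h1 : ((k.factorial : K)) ≠ 0 := Nat.cast_ne_zero.2 (Nat.factorial_ne_zero _)
  have h2 : (((m - k).factorial : K)) ≠ 0 := Nat.cast_ne_zero.2 (Nat.factorial_ne_zero _)
  have h3 : ((m.factorial : K)) ≠ 0 := Nat.cast_ne_zero.2 (Nat.factorial_ne_zero _)
  field_simp
  rw [← hsign, ← hfact]
  ring

lemma s9nil_mul_le (δ : Fin s → (A →ₗ[K] A))
    (hleib : ∀ i, ∀ a b : A, δ i (a * b) = δ i a * b + a * δ i b)
    (hln : ∀ i, ∀ a : A, ∃ n : ℕ, ((δ i) ^ n) a = 0) (i : Fin s) (a b : A) :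
    s9nil δ hln i (a * b) ≤ s9nil δ hln i a + s9nil δ hln i b := by
  apply s9nil_le
  rw [s9_leib_pow δ hleib i _ a b]
  apply Finset.sum_eq_zero
  intro k hk
  rw [Finset.mem_range] at hk
  rcases le_or_gt (s9nil δ hln i a) k with h | h
  · rw [s9_dpow_zero_of_le δ hln i a h, zero_mul, smul_zero]
  · rw [s9_dpow_zero_of_le δ hln i b (by omega), mul_zero, smul_zero]

lemma s9pi_mul (δ : Fin s → (A →ₗ[K] A)) (x : Fin s → A)
    (hleib : ∀ i, ∀ a b : A, δ i (a * b) = δ i a * b + a * δ i b)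
    (hln : ∀ i, ∀ a : A, ∃ n : ℕ, ((δ i) ^ n) a = 0)
    (hcentral : ∀ i, ∀ a : A, x i * a = a * x i) (i : Fin s) (a b : A) :
    s9pi δ x hln i (a * b) = s9pi δ x hln i a * s9pi δ x hln i b := by
  set Na := s9nil δ hln i a with hNa
  set Nb := s9nil δ hln i b with hNb
  set M := Na + Nb with hM
  rw [s9pi_eq_P δ x hln i (a * b) (s9nil_mul_le δ hleib hln i a b),
    s9pi_eq_P δ x hln i a (Nat.le_add_right _ _),
    s9pi_eq_P δ x hln i b (Nat.le_add_left _ _)]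
  -- RHS as double sum
  unfold s9P
  rw [Finset.sum_mul_sum]
  have hterm : ∀ k ∈ Finset.range M, ∀ l ∈ Finset.range M,
      (((-1 : K) ^ k) * ((k.factorial : K))⁻¹) • (x i ^ k * (δ i ^ k) a)
        * ((((-1 : K) ^ l) * ((l.factorial : K))⁻¹) • (x i ^ l * (δ i ^ l) b))
      = ((((-1 : K) ^ k) * ((k.factorial : K))⁻¹) * (((-1 : K) ^ l) * ((l.factorial : K))⁻¹))
          • (x i ^ (k + l) * ((δ i ^ k) a * (δ i ^ l) b)) := by
    intro k _ l _
    rw [smul_mul_assoc, mul_smul_comm, smul_smul]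
    congr 1
    rw [pow_add]
    simp only [mul_assoc]
    congr 1
    rw [← mul_assoc, ← s9_central_pow x hcentral i l ((δ i ^ k) a), mul_assoc]
  rw [Finset.sum_congr rfl (fun k hk => Finset.sum_congr rfl (fun l hl => hterm k hk l hl))]
  have hf : ∀ k l : ℕ, M ≤ k + l →
      ((((-1 : K) ^ k) * ((k.factorial : K))⁻¹) * (((-1 : K) ^ l) * ((l.factorial : K))⁻¹))
        • (x i ^ (k + l) * ((δ i ^ k) a * (δ i ^ l) b)) = 0 := by
    intro k l h
    rcases le_or_gt Na k with h' | h'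
    · rw [s9_dpow_zero_of_le δ hln i a h', zero_mul, mul_zero, smul_zero]
    · rw [s9_dpow_zero_of_le δ hln i b (by omega), mul_zero, mul_zero, smul_zero]
  rw [s9_grid (M := M) (fun k l =>
      ((((-1 : K) ^ k) * ((k.factorial : K))⁻¹) * (((-1 : K) ^ l) * ((l.factorial : K))⁻¹))
        • (x i ^ (k + l) * ((δ i ^ k) a * (δ i ^ l) b))) hf]
  -- LHS: expand Leibniz
  apply Finset.sum_congr rfl
  intro m _
  rw [s9_leib_pow δ hleib i m a b, Finset.mul_sum, Finset.smul_sum]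
  apply Finset.sum_congr rfl
  intro k hk
  rw [Finset.mem_range] at hk
  have hkm : k ≤ m := by omega
  rw [mul_smul_comm, ← Nat.cast_smul_eq_nsmul K, smul_smul, s9_coeff_mul hkm,
    show k + (m - k) = m by omega]

-- chunk 4d: kernel pullout and Taylor formula
lemma s9pi_sub_mem (δ : Fin s → (A →ₗ[K] A)) (x : Fin s → A)
    (hln : ∀ i, ∀ a : A, ∃ n : ℕ, ((δ i) ^ n) a = 0)
    (hcentral : ∀ i, ∀ a : A, x i * a = a * x i) (i : Fin s) (a : A) :
    a - s9pi δ x hln i a ∈ Ideal.span (Set.range x) := by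
  unfold s9pi
  cases hn : s9nil δ hln i a with
  | zero =>
    have ha : a = 0 := by
      have h2 := s9nil_spec δ hln i a
      rw [hn] at h2
      simpa using h2
    rw [ha]
    simp [s9P]
  | succ M =>
    unfold s9P
    rw [Finset.sum_range_succ' _ M]
    simp only [pow_zero, Nat.factorial_zero, Nat.cast_one, inv_one, mul_one, one_mul,
      one_smul, Module.End.one_apply]
    have hrw : ∀ z : A, a - (z + a) = -z := by intro z; abel
    rw [hrw]
    apply neg_mem
    apply Submodule.sum_mem
    intro k _
    have hx_mem : x i ∈ Ideal.span (Set.range x) := Ideal.subset_span ⟨i, rfl⟩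
    have hterm : x i ^ (k+1) * (δ i ^ (k+1)) a
        = (x i ^ k * (δ i ^ (k+1)) a) * x i := by
      rw [pow_succ, mul_assoc, hcentral i ((δ i ^ (k+1)) a), ← mul_assoc]
    rw [hterm]
    exact Submodule.smul_of_tower_mem _ _ (Ideal.mul_mem_left _ _ hx_mem)

lemma s9_alt_sum (m : ℕ) :
    ∑ k ∈ Finset.range (m + 1),
        ((k.factorial : K))⁻¹ * ((-1 : K) ^ (m - k) * (((m - k).factorial : K))⁻¹)
      = if m = 0 then 1 else 0 := by
  have hterm : ∀ k ∈ Finset.range (m + 1),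
      ((k.factorial : K))⁻¹ * ((-1 : K) ^ (m - k) * (((m - k).factorial : K))⁻¹)
        = ((-1 : K) ^ m * ((m.factorial : K))⁻¹) * ((-1 : K) ^ k * (m.choose k : K)) := by
    intro k hk
    rw [Finset.mem_range] at hk
    have h := s9_coeff_mul (K := K) (m := m) (k := k) (by omega)
    calc ((k.factorial : K))⁻¹ * ((-1 : K) ^ (m - k) * (((m - k).factorial : K))⁻¹)
        = (-1 : K) ^ k * (((-1 : K) ^ k * ((k.factorial : K))⁻¹)
            * ((-1 : K) ^ (m - k) * (((m - k).factorial : K))⁻¹)) := by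
          have hsq : (-1 : K) ^ k * (-1 : K) ^ k = 1 := by
            rw [← pow_add, ← two_mul, pow_mul]; norm_num
          linear_combination (-(((k.factorial : K))⁻¹
            * ((-1 : K) ^ (m - k) * (((m - k).factorial : K))⁻¹))) * hsq
      _ = (-1 : K) ^ k * (((-1 : K) ^ m * ((m.factorial : K))⁻¹) * (m.choose k : K)) := by
          rw [h]
      _ = ((-1 : K) ^ m * ((m.factorial : K))⁻¹) * ((-1 : K) ^ k * (m.choose k : K)) := by
          ring
  rw [Finset.sum_congr rfl hterm, ← Finset.mul_sum]
  have halt : ∑ k ∈ Finset.range (m + 1), ((-1 : K) ^ k * (m.choose k : K))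
      = if m = 0 then 1 else 0 := by
    have h := Int.alternating_sum_range_choose (n := m)
    have h2 := congrArg (fun z : ℤ => (z : K)) h
    push_cast at h2
    rw [← h2]
  rw [halt]
  rcases eq_or_ne m 0 with h | h
  · subst h; simp
  · simp [h]

/-- Taylor formula -/
lemma s9_taylor (δ : Fin s → (A →ₗ[K] A)) (x : Fin s → A)
    (hln : ∀ i, ∀ a : A, ∃ n : ℕ, ((δ i) ^ n) a = 0)
    (hcentral : ∀ i, ∀ a : A, x i * a = a * x i) (i : Fin s) (a : A) {M : ℕ}
    (hM : s9nil δ hln i a ≤ M) :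
    a = ∑ k ∈ Finset.range M,
        ((k.factorial : K))⁻¹ • (x i ^ k * s9pi δ x hln i ((δ i ^ k) a)) := by
  cases M with
  | zero =>
    have h0 : s9nil δ hln i a = 0 := Nat.le_zero.1 hM
    have ha : a = 0 := by
      have h2 := s9nil_spec δ hln i a
      rw [h0] at h2
      simpa using h2
    simp [ha]
  | succ M' =>
    set M := M' + 1 with hMdef
    have hpi : ∀ k, s9pi δ x hln i ((δ i ^ k) a) = s9P δ x i M ((δ i ^ k) a) := by
      intro k
      apply s9pi_eq_P
      apply s9nil_le
      rw [← Module.End.mul_apply, ← pow_add]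
      exact s9_dpow_zero_of_le δ hln i a (by omega)
    have hterm : ∀ k ∈ Finset.range M,
        ((k.factorial : K))⁻¹ • (x i ^ k * s9pi δ x hln i ((δ i ^ k) a))
          = ∑ l ∈ Finset.range M,
              (((k.factorial : K))⁻¹ * ((-1 : K) ^ l * ((l.factorial : K))⁻¹))
                • (x i ^ (k + l) * (δ i ^ (k + l)) a) := by
      intro k _
      rw [hpi k]
      unfold s9P
      rw [Finset.mul_sum, Finset.smul_sum]
      apply Finset.sum_congr rfl
      intro l _
      rw [mul_smul_comm, smul_smul]
      congr 1
      rw [pow_add, mul_assoc, ← Module.End.mul_apply, ← pow_add, add_comm l k]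
    rw [Finset.sum_congr rfl hterm]
    have hf : ∀ k l : ℕ, M ≤ k + l →
        (((k.factorial : K))⁻¹ * ((-1 : K) ^ l * ((l.factorial : K))⁻¹))
          • (x i ^ (k + l) * (δ i ^ (k + l)) a) = 0 := by
      intro k l h
      rw [s9_dpow_zero_of_le δ hln i a (by omega), mul_zero, smul_zero]
    rw [s9_grid (M := M) _ hf]
    have hinner : ∀ m ∈ Finset.range M,
        ∑ k ∈ Finset.range (m + 1),
            (((k.factorial : K))⁻¹ * ((-1 : K) ^ (m - k) * (((m - k).factorial : K))⁻¹))
              • (x i ^ (k + (m - k)) * (δ i ^ (k + (m - k))) a)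
          = if m = 0 then x i ^ 0 * (δ i ^ 0) a else 0 := by
      intro m _
      have hk : ∀ k ∈ Finset.range (m + 1), k + (m - k) = m := by
        intro k hk
        rw [Finset.mem_range] at hk
        omega
      calc ∑ k ∈ Finset.range (m + 1),
            (((k.factorial : K))⁻¹ * ((-1 : K) ^ (m - k) * (((m - k).factorial : K))⁻¹))
              • (x i ^ (k + (m - k)) * (δ i ^ (k + (m - k))) a)
          = ∑ k ∈ Finset.range (m + 1),
            (((k.factorial : K))⁻¹ * ((-1 : K) ^ (m - k) * (((m - k).factorial : K))⁻¹))
              • (x i ^ m * (δ i ^ m) a) := by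
            apply Finset.sum_congr rfl
            intro k hkm
            rw [hk k hkm]
        _ = (∑ k ∈ Finset.range (m + 1),
            ((k.factorial : K))⁻¹ * ((-1 : K) ^ (m - k) * (((m - k).factorial : K))⁻¹))
              • (x i ^ m * (δ i ^ m) a) := by rw [Finset.sum_smul]
        _ = (if m = 0 then (1:K) else 0) • (x i ^ m * (δ i ^ m) a) := by rw [s9_alt_sum]
        _ = if m = 0 then x i ^ 0 * (δ i ^ 0) a else 0 := by
            rcases eq_or_ne m 0 with h | h
            · subst h; simp
            · simp [h]
    rw [Finset.sum_congr rfl hinner, Finset.sum_ite_eq' (Finset.range M) 0]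
    simp [hMdef]

-- chunk 5: the composite retraction Ψ
noncomputable def s9psiL (δ : Fin s → (A →ₗ[K] A)) (x : Fin s → A)
    (hln : ∀ i, ∀ a : A, ∃ n : ℕ, ((δ i) ^ n) a = 0) (l : List (Fin s)) (a : A) : A :=
  l.foldr (fun i b => s9pi δ x hln i b) a

lemma s9psiL_nil (δ : Fin s → (A →ₗ[K] A)) (x : Fin s → A) (hln) (a : A) :
    s9psiL δ x hln [] a = a := rfl

lemma s9psiL_cons (δ : Fin s → (A →ₗ[K] A)) (x : Fin s → A) (hln) (i : Fin s)
    (l : List (Fin s)) (a : A) :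
    s9psiL δ x hln (i :: l) a = s9pi δ x hln i (s9psiL δ x hln l a) := rfl

lemma s9psiL_zero (δ : Fin s → (A →ₗ[K] A)) (x : Fin s → A) (hln) (l : List (Fin s)) :
    s9psiL δ x hln l 0 = 0 := by
  induction l with
  | nil => rfl
  | cons i l ih => rw [s9psiL_cons, ih, s9pi_zero]

lemma s9psiL_add (δ : Fin s → (A →ₗ[K] A)) (x : Fin s → A) (hln) (l : List (Fin s)) (a b : A) :
    s9psiL δ x hln l (a + b) = s9psiL δ x hln l a + s9psiL δ x hln l b := by
  induction l with
  | nil => rfl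
  | cons i l ih => rw [s9psiL_cons, ih, s9pi_add, s9psiL_cons, s9psiL_cons]

lemma s9psiL_smul (δ : Fin s → (A →ₗ[K] A)) (x : Fin s → A) (hln) (l : List (Fin s))
    (c : K) (a : A) : s9psiL δ x hln l (c • a) = c • s9psiL δ x hln l a := by
  induction l with
  | nil => rfl
  | cons i l ih => rw [s9psiL_cons, ih, s9pi_smul, s9psiL_cons]

lemma s9psiL_mul (δ : Fin s → (A →ₗ[K] A)) (x : Fin s → A)
    (hleib : ∀ i, ∀ a b : A, δ i (a * b) = δ i a * b + a * δ i b) (hln)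
    (hcentral : ∀ i, ∀ a : A, x i * a = a * x i) (l : List (Fin s)) (a b : A) :
    s9psiL δ x hln l (a * b) = s9psiL δ x hln l a * s9psiL δ x hln l b := by
  induction l with
  | nil => rfl
  | cons i l ih =>
    rw [s9psiL_cons, ih, s9pi_mul δ x hleib hln hcentral, s9psiL_cons, s9psiL_cons]

lemma s9psiL_one (δ : Fin s → (A →ₗ[K] A)) (x : Fin s → A)
    (hleib : ∀ i, ∀ a b : A, δ i (a * b) = δ i a * b + a * δ i b) (hln) (l : List (Fin s)) :
    s9psiL δ x hln l 1 = 1 := by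
  induction l with
  | nil => rfl
  | cons i l ih => rw [s9psiL_cons, ih, s9pi_one δ x hleib hln]

lemma s9psiL_fix (δ : Fin s → (A →ₗ[K] A)) (x : Fin s → A) (hln) (l : List (Fin s))
    (a : A) (h : ∀ k, δ k a = 0) : s9psiL δ x hln l a = a := by
  induction l with
  | nil => rfl
  | cons i l ih => rw [s9psiL_cons, ih, s9pi_of_ker δ x hln i a (h i)]

lemma s9psiL_ker (δ : Fin s → (A →ₗ[K] A)) (x : Fin s → A)
    (hleib : ∀ i, ∀ a b : A, δ i (a * b) = δ i a * b + a * δ i b)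
    (hcomm : ∀ i j, ∀ a : A, δ i (δ j a) = δ j (δ i a)) (hln)
    (hx : ∀ i j, δ i (x j) = if i = j then 1 else 0) (l : List (Fin s)) (a : A)
    (k : Fin s) (hk : k ∈ l) : δ k (s9psiL δ x hln l a) = 0 := by
  induction l with
  | nil => simp at hk
  | cons i l ih =>
    rw [s9psiL_cons]
    rcases eq_or_ne k i with h | h
    · subst h
      exact s9_d_pi_self δ x hln hleib k (by simpa using hx k k) _
    · have hkl : k ∈ l := by
        rcases List.mem_cons.1 hk with h' | h'
        · exact absurd h' h
        · exact h'
      rw [s9_d_pi_comm δ x hleib hcomm hln h (by simpa [h] using hx k i) _,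
        ih hkl, s9pi_zero]

lemma s9psiL_x_notmem (δ : Fin s → (A →ₗ[K] A)) (x : Fin s → A) (hln)
    (hx : ∀ i j, δ i (x j) = if i = j then 1 else 0) (l : List (Fin s)) (i : Fin s)
    (hi : i ∉ l) : s9psiL δ x hln l (x i) = x i := by
  induction l with
  | nil => rfl
  | cons j l ih =>
    have hij : j ≠ i := fun h => hi (h ▸ List.mem_cons_self)
    have hil : i ∉ l := fun h => hi (List.mem_cons_of_mem _ h)
    rw [s9psiL_cons, ih hil, s9pi_x_ne δ x hln (by simpa [hij] using hx j i)]

lemma s9psiL_x (δ : Fin s → (A →ₗ[K] A)) (x : Fin s → A)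
    (hleib : ∀ i, ∀ a b : A, δ i (a * b) = δ i a * b + a * δ i b) (hln)
    (hx : ∀ i j, δ i (x j) = if i = j then 1 else 0) (l : List (Fin s)) (i : Fin s)
    (hi : i ∈ l) : s9psiL δ x hln l (x i) = 0 := by
  induction l with
  | nil => simp at hi
  | cons j l ih =>
    rw [s9psiL_cons]
    by_cases hil : i ∈ l
    · rw [ih hil, s9pi_zero]
    · have hij : i = j := by
        rcases List.mem_cons.1 hi with h' | h'
        · exact h'
        · exact absurd h' hil
      subst hij
      rw [s9psiL_x_notmem δ x hln hx l i hil]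
      exact s9pi_x_self δ x hln i (by simpa using hx i i) (s9_d_one δ hleib i)

lemma s9psiL_sub_mem (δ : Fin s → (A →ₗ[K] A)) (x : Fin s → A) (hln)
    (hcentral : ∀ i, ∀ a : A, x i * a = a * x i) (l : List (Fin s)) (a : A) :
    a - s9psiL δ x hln l a ∈ Ideal.span (Set.range x) := by
  induction l with
  | nil => simp [s9psiL_nil]
  | cons i l ih =>
    rw [s9psiL_cons]
    have h2 := s9pi_sub_mem δ x hln hcentral i (s9psiL δ x hln l a)
    have h3 := Submodule.add_mem _ ih h2
    simpa using h3

-- chunk 6: monomials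
/-- product of `ofFn` of pointwise products, when the second factors are central -/
lemma s9_ofFn_mul_prod {n : ℕ} (f g : Fin n → A)
    (hg : ∀ i : Fin n, ∀ a : A, g i * a = a * g i) :
    (List.ofFn fun i => f i * g i).prod = (List.ofFn f).prod * (List.ofFn g).prod := by
  induction n with
  | zero => simp
  | succ n ih =>
    rw [List.ofFn_succ, List.ofFn_succ, List.ofFn_succ, List.prod_cons, List.prod_cons,
      List.prod_cons, ih (fun i => f i.succ) (fun i => g i.succ) (fun i a => hg i.succ a)]
    have hcg : ∀ z : A, g 0 * z = z * g 0 := hg 0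
    calc f 0 * g 0 * ((List.ofFn fun i => f i.succ).prod * (List.ofFn fun i => g i.succ).prod)
        = f 0 * (g 0 * (List.ofFn fun i => f i.succ).prod) * (List.ofFn fun i => g i.succ).prod := by
          rw [mul_assoc, mul_assoc, mul_assoc]
      _ = f 0 * ((List.ofFn fun i => f i.succ).prod * g 0) * (List.ofFn fun i => g i.succ).prod := by
          rw [hcg]
      _ = f 0 * (List.ofFn fun i => f i.succ).prod * (g 0 * (List.ofFn fun i => g i.succ).prod) := by
          rw [mul_assoc, mul_assoc, mul_assoc]

/-- product of `ofFn` of a function supported at one point -/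
lemma s9_ofFn_single_prod {n : ℕ} (f : Fin n → A) (j : Fin n)
    (hf : ∀ i, i ≠ j → f i = 1) : (List.ofFn f).prod = f j := by
  induction n with
  | zero => exact absurd j.2 (by omega)
  | succ n ih =>
    rw [List.ofFn_succ, List.prod_cons]
    rcases eq_or_ne j 0 with h0 | h0
    · subst h0
      have : ∀ i : Fin n, f i.succ = 1 := fun i => hf i.succ (Fin.succ_ne_zero i)
      have hone : (List.ofFn fun i : Fin n => f i.succ).prod = 1 := by
        apply List.prod_eq_one
        intro z hz
        rw [List.mem_ofFn] at hz
        obtain ⟨i, rfl⟩ := hz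
        exact this i
      rw [hone, mul_one]
    · obtain ⟨j', rfl⟩ : ∃ j' : Fin n, j = j'.succ := ⟨j.pred h0, (Fin.succ_pred _ _).symm⟩
      rw [hf 0 (Ne.symm (by simpa using h0)), one_mul]
      exact ih (fun i => f i.succ) j' (fun i hi => hf i.succ (by simpa using hi))

noncomputable def s9m (x : Fin s → A) (α : Fin s → ℕ) : A :=
  (List.ofFn fun i => x i ^ α i).prod

lemma s9m_zero (x : Fin s → A) : s9m x 0 = 1 := by
  unfold s9m
  apply List.prod_eq_one
  intro z hz
  rw [List.mem_ofFn] at hz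
  obtain ⟨i, rfl⟩ := hz
  simp [Pi.zero_apply]

lemma s9m_add (x : Fin s → A) (hcentral : ∀ i, ∀ a : A, x i * a = a * x i)
    (α β : Fin s → ℕ) : s9m x (α + β) = s9m x α * s9m x β := by
  unfold s9m
  rw [← s9_ofFn_mul_prod (fun i => x i ^ α i) (fun i => x i ^ β i)
    (fun i a => s9_central_pow x hcentral i (β i) a)]
  have hfun : (fun i => x i ^ (α + β) i) = fun i => x i ^ α i * x i ^ β i := by
    funext i
    rw [Pi.add_apply, pow_add]
  rw [hfun]

/-- decomposition pulling out the `j`-th variable -/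
lemma s9m_split (x : Fin s → A) (hcentral : ∀ i, ∀ a : A, x i * a = a * x i)
    (α : Fin s → ℕ) (j : Fin s) :
    s9m x α = x j ^ α j * s9m x (Function.update α j 0) := by
  have hdecomp : α = (fun i => if i = j then α j else 0) + Function.update α j 0 := by
    funext i
    rcases eq_or_ne i j with h | h
    · subst h; simp
    · simp [h, Function.update_of_ne h]
  have hsingle : s9m x (fun i => if i = j then α j else 0) = x j ^ α j := by
    unfold s9m
    rw [s9_ofFn_single_prod (fun i => x i ^ (if i = j then α j else 0)) j]
    · simp
    · intro i hi
      simp [if_neg hi]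
  conv_lhs => rw [hdecomp]
  rw [s9m_add x hcentral, hsingle]

lemma s9_d_list_prod_zero (δ : Fin s → (A →ₗ[K] A))
    (hleib : ∀ i, ∀ a b : A, δ i (a * b) = δ i a * b + a * δ i b) (j : Fin s)
    (l : List A) (h : ∀ c ∈ l, δ j c = 0) : δ j l.prod = 0 := by
  induction l with
  | nil => simpa using s9_d_one δ hleib j
  | cons c l ih =>
    rw [List.prod_cons, hleib j, h c (List.mem_cons_self),
      ih (fun d hd => h d (List.mem_cons_of_mem _ hd)), zero_mul, mul_zero, add_zero]

lemma s9_d_m_zero (δ : Fin s → (A →ₗ[K] A)) (x : Fin s → A)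
    (hleib : ∀ i, ∀ a b : A, δ i (a * b) = δ i a * b + a * δ i b)
    (hx : ∀ i j, δ i (x j) = if i = j then 1 else 0) (j : Fin s) (γ : Fin s → ℕ)
    (hγ : γ j = 0) : δ j (s9m x γ) = 0 := by
  unfold s9m
  apply s9_d_list_prod_zero δ hleib j
  intro c hc
  rw [List.mem_ofFn] at hc
  obtain ⟨i, rfl⟩ := hc
  rcases eq_or_ne i j with h | h
  · subst h
    rw [hγ, pow_zero]
    exact s9_d_one δ hleib i
  · exact s9_dx_pow_ne δ x hleib (by simpa [Ne.symm h] using hx j i) (γ i)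

lemma s9_dpow_mul_right (δ : Fin s → (A →ₗ[K] A))
    (hleib : ∀ i, ∀ a b : A, δ i (a * b) = δ i a * b + a * δ i b) (j : Fin s)
    (n : ℕ) (c b : A) (hb : δ j b = 0) : (δ j ^ n) (c * b) = (δ j ^ n) c * b := by
  induction n generalizing c with
  | zero => simp
  | succ n ih =>
    rw [pow_succ, Module.End.mul_apply, Module.End.mul_apply, hleib j, hb, mul_zero,
      add_zero, ih (δ j c)]

lemma s9_dpow_x_self (δ : Fin s → (A →ₗ[K] A)) (x : Fin s → A)
    (hleib : ∀ i, ∀ a b : A, δ i (a * b) = δ i a * b + a * δ i b)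
    {j : Fin s} (hxj : δ j (x j) = 1) (n k : ℕ) :
    (δ j ^ n) (x j ^ k) = (k.descFactorial n) • x j ^ (k - n) := by
  induction n generalizing k with
  | zero => simp
  | succ n ih =>
    have hdesc : k.descFactorial (n+1) = k * (k - 1).descFactorial n := by
      cases k with
      | zero => simp
      | succ m => rw [Nat.succ_descFactorial_succ, Nat.succ_sub_one]
    rw [pow_succ, Module.End.mul_apply, s9_dx_pow_self δ x hleib hxj k, map_nsmul,
      ih (k-1), hdesc, mul_smul, show k - 1 - n = k - (n+1) by omega]

lemma s9_dpow_m (δ : Fin s → (A →ₗ[K] A)) (x : Fin s → A)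
    (hleib : ∀ i, ∀ a b : A, δ i (a * b) = δ i a * b + a * δ i b)
    (hx : ∀ i j, δ i (x j) = if i = j then 1 else 0)
    (hcentral : ∀ i, ∀ a : A, x i * a = a * x i) (j : Fin s) (n : ℕ) (α : Fin s → ℕ) :
    (δ j ^ n) (s9m x α)
      = ((α j).descFactorial n) • s9m x (Function.update α j (α j - n)) := by
  rw [s9m_split x hcentral α j,
    s9_dpow_mul_right δ hleib j n _ _ (s9_d_m_zero δ x hleib hx j _ (by simp)),
    s9_dpow_x_self δ x hleib (by simpa using hx j j) n (α j), smul_mul_assoc]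
  congr 1
  rw [s9m_split x hcentral (Function.update α j (α j - n)) j, Function.update_self,
    Function.update_idem]

-- chunk 7: composite derivative operator and evaluation on monomials
lemma s9_commuteE (δ : Fin s → (A →ₗ[K] A))
    (hcomm : ∀ i j, ∀ a : A, δ i (δ j a) = δ j (δ i a)) (i j : Fin s) :
    Commute (δ i : Module.End K A) (δ j) := by
  apply LinearMap.ext
  intro c
  exact hcomm i j c

lemma s9D_pairwise (δ : Fin s → (A →ₗ[K] A))
    (hcomm : ∀ i j, ∀ a : A, δ i (δ j a) = δ j (δ i a)) (β : Fin s → ℕ) (S : Finset (Fin s)) :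
    (S : Set (Fin s)).Pairwise (Function.onFun Commute fun j => (δ j : Module.End K A) ^ β j) :=
  fun a _ b _ _ => Commute.pow_pow (s9_commuteE δ hcomm a b) _ _

noncomputable def s9D (δ : Fin s → (A →ₗ[K] A))
    (hcomm : ∀ i j, ∀ a : A, δ i (δ j a) = δ j (δ i a)) (β : Fin s → ℕ) (S : Finset (Fin s)) :
    Module.End K A :=
  S.noncommProd (fun j => (δ j : Module.End K A) ^ β j) (s9D_pairwise δ hcomm β S)

lemma s9D_eval (δ : Fin s → (A →ₗ[K] A)) (x : Fin s → A)
    (hleib : ∀ i, ∀ a b : A, δ i (a * b) = δ i a * b + a * δ i b)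
    (hcomm : ∀ i j, ∀ a : A, δ i (δ j a) = δ j (δ i a))
    (hx : ∀ i j, δ i (x j) = if i = j then 1 else 0)
    (hcentral : ∀ i, ∀ a : A, x i * a = a * x i) (S : Finset (Fin s)) :
    ∀ (β α : Fin s → ℕ), (∀ j, j ∉ S → β j = 0) →
      (s9D δ hcomm β S) (s9m x α)
        = (∏ j ∈ S, (α j).descFactorial (β j)) • s9m x (fun j => α j - β j) := by
  induction S using Finset.induction_on with
  | empty =>
    intro β α hβ
    unfold s9D
    rw [Finset.noncommProd_empty, Finset.prod_empty, Module.End.one_apply, one_smul]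
    congr 1
    funext j
    rw [hβ j (Finset.notMem_empty j), Nat.sub_zero]
  | @insert a S ha ih =>
    intro β α hβ
    unfold s9D
    rw [Finset.noncommProd_insert_of_notMem _ _ _ _ ha, Module.End.mul_apply]
    set β' := Function.update β a 0 with hβ'def
    have hcongr : S.noncommProd (fun j => (δ j : Module.End K A) ^ β j)
          (fun a _ b _ _ => Commute.pow_pow (s9_commuteE δ hcomm a b) _ _)
        = S.noncommProd (fun j => (δ j : Module.End K A) ^ β' j)
          (fun a _ b _ _ => Commute.pow_pow (s9_commuteE δ hcomm a b) _ _) := by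
      apply Finset.noncommProd_congr rfl
      intro j hj
      have : β' j = β j := Function.update_of_ne (ne_of_mem_of_not_mem hj ha) _ _
      rw [this]
    rw [hcongr]
    have hβ'0 : ∀ j, j ∉ S → β' j = 0 := by
      intro j hj
      rcases eq_or_ne j a with h | h
      · subst h; simp [hβ'def]
      · rw [hβ'def, Function.update_of_ne h]
        exact hβ j (by simp [h, hj])
    have iha := ih β' α hβ'0
    unfold s9D at iha
    rw [iha, map_nsmul, s9_dpow_m δ x hleib hx hcentral a (β a) (fun j => α j - β' j)]
    simp only [hβ'def, Function.update_self, Nat.sub_zero]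
    have he2 : Function.update (fun j => α j - Function.update β a 0 j) a (α a - β a)
        = fun j => α j - β j := by
      funext j
      rcases eq_or_ne j a with h | h
      · subst h; rw [Function.update_self]
      · rw [Function.update_of_ne h, Function.update_of_ne h]
    rw [he2, smul_smul, Finset.prod_insert ha]
    congr 1
    rw [mul_comm]
    congr 1
    apply Finset.prod_congr rfl
    intro j hj
    rw [Function.update_of_ne (ne_of_mem_of_not_mem hj ha)]

lemma s9_dpow_mul_left (δ : Fin s → (A →ₗ[K] A))
    (hleib : ∀ i, ∀ a b : A, δ i (a * b) = δ i a * b + a * δ i b) (j : Fin s)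
    (n : ℕ) (c b : A) (hc : δ j c = 0) : (δ j ^ n) (c * b) = c * (δ j ^ n) b := by
  induction n generalizing b with
  | zero => simp
  | succ n ih =>
    rw [pow_succ, Module.End.mul_apply, Module.End.mul_apply, hleib j, hc, zero_mul,
      zero_add, ih (δ j b)]

lemma s9D_mul_left (δ : Fin s → (A →ₗ[K] A))
    (hleib : ∀ i, ∀ a b : A, δ i (a * b) = δ i a * b + a * δ i b)
    (hcomm : ∀ i j, ∀ a : A, δ i (δ j a) = δ j (δ i a)) (β : Fin s → ℕ)
    (S : Finset (Fin s)) (c : A) (hc : ∀ k, δ k c = 0) (b : A) :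
    (s9D δ hcomm β S) (c * b) = c * (s9D δ hcomm β S) b := by
  induction S using Finset.induction_on with
  | empty => unfold s9D; rw [Finset.noncommProd_empty]; simp
  | @insert a S ha ih =>
    unfold s9D
    rw [Finset.noncommProd_insert_of_notMem _ _ _ _ ha, Module.End.mul_apply,
      Module.End.mul_apply]
    unfold s9D at ih
    rw [ih, s9_dpow_mul_left δ hleib a (β a) c _ (hc a)]

-- Ψ on monomials
lemma s9psiL_m_ne_zero (δ : Fin s → (A →ₗ[K] A)) (x : Fin s → A)
    (hleib : ∀ i, ∀ a b : A, δ i (a * b) = δ i a * b + a * δ i b)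
    (hln : ∀ i, ∀ a : A, ∃ n : ℕ, ((δ i) ^ n) a = 0)
    (hx : ∀ i j, δ i (x j) = if i = j then 1 else 0)
    (hcentral : ∀ i, ∀ a : A, x i * a = a * x i) (γ : Fin s → ℕ) (hγ : γ ≠ 0) :
    s9psiL δ x hln (List.finRange s) (s9m x γ) = 0 := by
  have : ∃ j, γ j ≠ 0 := by
    by_contra h
    push_neg at h
    exact hγ (funext h)
  obtain ⟨j, hj⟩ := this
  obtain ⟨t, ht⟩ : ∃ t, γ j = t + 1 := ⟨γ j - 1, by omega⟩
  rw [s9m_split x hcentral γ j, ht, pow_succ, mul_assoc,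
    s9psiL_mul δ x hleib hln hcentral,
    s9psiL_mul δ x hleib hln hcentral,
    s9psiL_x δ x hleib hln hx (List.finRange s) j (List.mem_finRange j),
    zero_mul, mul_zero]

lemma s9psiL_m (δ : Fin s → (A →ₗ[K] A)) (x : Fin s → A)
    (hleib : ∀ i, ∀ a b : A, δ i (a * b) = δ i a * b + a * δ i b)
    (hln : ∀ i, ∀ a : A, ∃ n : ℕ, ((δ i) ^ n) a = 0)
    (hx : ∀ i j, δ i (x j) = if i = j then 1 else 0)
    (hcentral : ∀ i, ∀ a : A, x i * a = a * x i) (γ : Fin s → ℕ) :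
    s9psiL δ x hln (List.finRange s) (s9m x γ)
      = if γ = 0 then 1 else 0 := by
  rcases eq_or_ne γ 0 with h | h
  · subst h
    rw [if_pos rfl, s9m_zero, s9psiL_one δ x hleib hln]
  · rw [if_neg h, s9psiL_m_ne_zero δ x hleib hln hx hcentral γ h]
end Stmt9Aux

/-- if moreover the `x i` are central, then `A` is generated as a
`K`-algebra by `A^δ ∪ {x_1, …, x_s}`, the `x i` are algebraically independent
over `A^δ`, and `A/(x_1, …, x_s) ≅ A^δ` (expressed via a retraction
`ψ : A → A` onto `A^δ` whose kernel is the ideal generated by the `x i`). -/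
theorem stmt9 {K A : Type*} [Field K] [CharZero K] [Ring A] [Algebra K A]
    {s : ℕ} (δ : Fin s → (A →ₗ[K] A))
    (hleib : ∀ i, ∀ a b : A, δ i (a * b) = δ i a * b + a * δ i b)
    (hcomm : ∀ i j, ∀ a : A, δ i (δ j a) = δ j (δ i a))
    (hln : ∀ i, ∀ a : A, ∃ n : ℕ, ((δ i) ^ n) a = 0)
    (x : Fin s → A)
    (hx : ∀ i j, δ i (x j) = if i = j then 1 else 0)
    (hcentral : ∀ i, ∀ a : A, x i * a = a * x i) :
    Algebra.adjoin K ({a : A | ∀ k, δ k a = 0} ∪ Set.range x) = ⊤ ∧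
    (∀ c : (Fin s → ℕ) →₀ A,
      (∀ α i, δ i (c α) = 0) →
      c.sum (fun α lam => lam * (List.ofFn fun i => x i ^ α i).prod) = 0 →
      c = 0) ∧
    (∃ ψ : A →ₐ[K] A,
      Set.range ψ = {a : A | ∀ k, δ k a = 0} ∧
      (∀ a : A, (∀ k, δ k a = 0) → ψ a = a) ∧
      (∀ a : A, ψ a = 0 ↔ a ∈ Ideal.span (Set.range x))) := by
  classical
  -- the retraction as an algebra homomorphism
  let ψlin : A →ₗ[K] A :=
    { toFun := s9psiL δ x hln (List.finRange s)
      map_add' := s9psiL_add δ x hln (List.finRange s)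
      map_smul' := fun c a => s9psiL_smul δ x hln (List.finRange s) c a }
  let ψ : A →ₐ[K] A := AlgHom.ofLinearMap ψlin
    (s9psiL_one δ x hleib hln (List.finRange s))
    (s9psiL_mul δ x hleib hln hcentral (List.finRange s))
  have hψ : ∀ a, ψ a = s9psiL δ x hln (List.finRange s) a := fun a => rfl
  refine ⟨?_, ?_, ?_⟩
  · -- Part 1: generation
    rw [eq_top_iff]
    intro a _
    suffices H : ∀ n, ∀ a : A, (∑ j, s9nil δ hln j a) ≤ n →
        a ∈ Algebra.adjoin K ({a : A | ∀ k, δ k a = 0} ∪ Set.range x) from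
      H _ a le_rfl
    intro n
    induction n using Nat.strong_induction_on with
    | _ n ihn =>
      intro a hsum
      by_cases hker : ∀ k, δ k a = 0
      · exact Algebra.subset_adjoin (Or.inl hker)
      · push_neg at hker
        obtain ⟨i, hi⟩ := hker
        have h2 : 2 ≤ s9nil δ hln i a := by
          by_contra hlt
          push_neg at hlt
          have h1' : (δ i ^ 1) a = 0 := s9_dpow_zero_of_le δ hln i a (by omega)
          rw [pow_one] at h1'
          exact hi h1'
        have htay := s9_taylor δ x hln hcentral i a (le_refl (s9nil δ hln i a))
        rw [htay]
        apply Subalgebra.sum_mem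
        intro k _
        apply Subalgebra.smul_mem
        apply Subalgebra.mul_mem
        · have hxi : x i ∈ Algebra.adjoin K ({a : A | ∀ k, δ k a = 0} ∪ Set.range x) :=
            Algebra.subset_adjoin (Set.mem_union_right _ (Set.mem_range_self i))
          exact pow_mem hxi _
        · set b := s9pi δ x hln i ((δ i ^ k) a) with hb
          have hνb : (∑ j, s9nil δ hln j b) < (∑ j, s9nil δ hln j a) := by
            rw [← Finset.add_sum_erase _ _ (Finset.mem_univ i),
              ← Finset.add_sum_erase _ (fun j => s9nil δ hln j a) (Finset.mem_univ i)]
            have hb_i : s9nil δ hln i b ≤ 1 :=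
              s9nil_pi_self_le δ x hln hleib i (by simpa using hx i i) _
            have hb_j : ∀ j ∈ Finset.univ.erase i,
                s9nil δ hln j b ≤ s9nil δ hln j a := by
              intro j hj
              have hne : j ≠ i := (Finset.mem_erase.1 hj).1
              calc s9nil δ hln j b
                  ≤ s9nil δ hln j ((δ i ^ k) a) :=
                    s9nil_pi_le δ x hleib hcomm hln hne (by simpa [hne] using hx j i) _
                _ ≤ s9nil δ hln j a := s9nil_dpow_le δ hcomm hln j i k a
            have hsum' := Finset.sum_le_sum hb_j
            omega
          exact ihn _ (lt_of_lt_of_le hνb hsum) b le_rfl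
  · -- Part 2: algebraic independence
    intro c hc hcsum
    ext β
    rw [Finsupp.coe_zero, Pi.zero_apply]
    by_cases hβs : β ∈ c.support
    · have hsum0 : c.sum (fun α lam => lam * s9m x α) = 0 := hcsum
      have h1 : ψ ((s9D δ hcomm β Finset.univ) (c.sum fun α lam => lam * s9m x α)) = 0 := by
        rw [hsum0, map_zero, map_zero]
      rw [Finsupp.sum, map_sum, map_sum] at h1
      have hterm : ∀ α ∈ c.support,
          ψ ((s9D δ hcomm β Finset.univ) (c α * s9m x α))
            = if α = β then (∏ j, (β j).factorial) • c β else 0 := by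
        intro α _
        rw [s9D_mul_left δ hleib hcomm β Finset.univ (c α) (hc α) _,
          s9D_eval δ x hleib hcomm hx hcentral Finset.univ β α
            (fun j hj => absurd (Finset.mem_univ j) hj),
          map_mul, map_nsmul]
        have hfix : ψ (c α) = c α := s9psiL_fix δ x hln (List.finRange s) (c α) (hc α)
        rw [hfix]
        rcases eq_or_ne α β with h | h
        · subst h
          have hzero : (fun j => α j - α j) = (0 : Fin s → ℕ) := by
            funext j; simp
          rw [if_pos rfl, hψ, hzero, s9psiL_m δ x hleib hln hx hcentral 0, if_pos rfl,
            mul_smul_comm, mul_one]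
          congr 1
          · apply Finset.prod_congr rfl
            intro j _
            exact Nat.descFactorial_self (α j)
        · rw [if_neg h]
          by_cases hle : ∀ j, β j ≤ α j
          · have hne0 : (fun j => α j - β j) ≠ (0 : Fin s → ℕ) := by
              intro hzero
              apply h
              funext j
              have h1 := congrFun hzero j
              simp only [Pi.zero_apply] at h1
              have := hle j
              omega
            rw [hψ, s9psiL_m δ x hleib hln hx hcentral _, if_neg hne0, smul_zero,
              mul_zero]
          · push_neg at hle
            obtain ⟨j, hj⟩ := hle
            have : (α j).descFactorial (β j) = 0 :=
              Nat.descFactorial_eq_zero_iff_lt.2 hj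
            rw [Finset.prod_eq_zero (Finset.mem_univ j) this, zero_smul, mul_zero]
      rw [Finset.sum_congr rfl hterm, Finset.sum_ite_eq' c.support β
        (fun _ => (∏ j, (β j).factorial) • c β), if_pos hβs] at h1
      -- conclude from torsion-freeness
      have hne0 : (((∏ j, (β j).factorial : ℕ)) : K) ≠ 0 := by
        exact Nat.cast_ne_zero.2
          (Finset.prod_pos (fun j _ => Nat.factorial_pos (β j))).ne'
      rw [← Nat.cast_smul_eq_nsmul K] at h1
      have h2 := congrArg (fun z => ((((∏ j, (β j).factorial : ℕ)) : K))⁻¹ • z) h1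
      simp only [smul_smul, inv_mul_cancel₀ hne0, one_smul, smul_zero] at h2
      exact h2
    · exact Finsupp.notMem_support_iff.1 hβs
  · -- Part 3: the retraction
    refine ⟨ψ, ?_, ?_, ?_⟩
    · ext a
      constructor
      · rintro ⟨b, rfl⟩ k
        exact s9psiL_ker δ x hleib hcomm hln hx (List.finRange s) b k (List.mem_finRange k)
      · intro h
        exact ⟨a, s9psiL_fix δ x hln (List.finRange s) a h⟩
    · intro a h
      exact s9psiL_fix δ x hln (List.finRange s) a h
    · intro a
      constructor
      · intro h0
        have hmem := s9psiL_sub_mem δ x hln hcentral (List.finRange s) a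
        have h0' : s9psiL δ x hln (List.finRange s) a = 0 := h0
        rw [h0', sub_zero] at hmem
        exact hmem
      · intro hmem
        induction hmem using Submodule.span_induction with
        | mem z hz =>
          obtain ⟨i, rfl⟩ := hz
          exact s9psiL_x δ x hleib hln hx (List.finRange s) i (List.mem_finRange i)
        | zero => exact map_zero ψ
        | add y z _ _ hy hz => rw [map_add, hy, hz, add_zero]
        | smul r y _ hy => rw [smul_eq_mul, map_mul, hy, mul_zero]
end

section
/- Let A be an algebra over a field K of characteristic zero with commuting locally nilpotent derivations δ_1, …, δ_s and elements x_1, …, x_s such that δ_i(x_j) = δ_{ij}, and let σ ∈ Aut_K(A). Then σ commutes with all the derivations δ_1, …, δ_s (σ δ_i = δ_i σ for all i) if and only if σ(A^δ) = A^δ and σ(x_i) = x_i + λ_i for some λ_i ∈ A^δ, for each i. -/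
set_option linter.unusedSectionVars false

section Aux

variable {K A : Type*} [Field K] [CharZero K] [Ring A] [Algebra K A]
    {s : ℕ} (δ : Fin s → (A →ₗ[K] A))

theorem aux_delta_one (hleib : ∀ i, ∀ a b : A, δ i (a * b) = δ i a * b + a * δ i b)
    (i : Fin s) : δ i (1 : A) = 0 := by
  have h := hleib i 1 1
  simp only [mul_one, one_mul] at h
  have : δ i (1:A) + δ i 1 = δ i 1 := h.symm
  exact add_eq_left.mp ((add_comm _ _).trans this)

theorem aux_pow_comm (hcomm : ∀ i j, ∀ a : A, δ i (δ j a) = δ j (δ i a))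
    (i j : Fin s) (n : ℕ) (a : A) : ((δ i)^n) (δ j a) = δ j (((δ i)^n) a) := by
  induction n generalizing a with
  | zero => simp
  | succ n ih =>
    rw [pow_succ, Module.End.mul_apply, Module.End.mul_apply, hcomm i j, ih]


variable (x : Fin s → A)

theorem aux_dxpow (hleib : ∀ i, ∀ a b : A, δ i (a * b) = δ i a * b + a * δ i b)
    (hx : ∀ i j, δ i (x j) = if i = j then 1 else 0)
    (i : Fin s) (n : ℕ) : δ i (x i ^ n) = n • x i ^ (n - 1) := by
  induction n with
  | zero => simp [aux_delta_one δ hleib]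
  | succ n ih =>
    rw [pow_succ, hleib, ih, hx, if_pos rfl, mul_one, smul_mul_assoc]
    cases n with
    | zero => simp
    | succ m =>
      simp only [Nat.add_sub_cancel, Nat.succ_sub_one]
      rw [← pow_succ, succ_nsmul, succ_nsmul, succ_nsmul]

theorem aux_dxpow_ne (hleib : ∀ i, ∀ a b : A, δ i (a * b) = δ i a * b + a * δ i b)
    (hx : ∀ i j, δ i (x j) = if i = j then 1 else 0)
    {i j : Fin s} (hij : j ≠ i) (n : ℕ) : δ j (x i ^ n) = 0 := by
  induction n with
  | zero => simp [aux_delta_one δ hleib]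
  | succ n ih =>
    rw [pow_succ, hleib, ih, hx, if_neg hij, mul_zero, zero_mul, add_zero]

/-- The subalgebra generated by the kernel and the slices. -/
def Sgen : Subalgebra K A :=
  Algebra.adjoin K ({a : A | ∀ i, δ i a = 0} ∪ Set.range x)

theorem aux_x_mem (i : Fin s) : x i ∈ Sgen δ x := by
  have h : x i ∈ ({a : A | ∀ i, δ i a = 0} ∪ Set.range x) := Or.inr ⟨i, rfl⟩
  exact Algebra.subset_adjoin h

theorem aux_ker_mem {a : A} (ha : ∀ i, δ i a = 0) : a ∈ Sgen δ x := by
  have h : a ∈ ({a : A | ∀ i, δ i a = 0} ∪ Set.range x) := Or.inl ha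
  exact Algebra.subset_adjoin h

theorem aux_stable (hleib : ∀ i, ∀ a b : A, δ i (a * b) = δ i a * b + a * δ i b)
    (hx : ∀ i j, δ i (x j) = if i = j then 1 else 0)
    {a : A} (ha : a ∈ Sgen δ x) (i : Fin s) : δ i a ∈ Sgen δ x := by
  induction ha using Algebra.adjoin_induction with
  | mem b hb =>
    rcases hb with hb | ⟨j, rfl⟩
    · rw [hb i]; exact zero_mem _
    · rw [hx]; split_ifs
      · exact one_mem _
      · exact zero_mem _
  | algebraMap r =>
    rw [Algebra.algebraMap_eq_smul_one, map_smul, aux_delta_one δ hleib, smul_zero]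
    exact zero_mem _
  | add b c hb hc ihb ihc => rw [map_add]; exact add_mem ihb ihc
  | mul b c hb hc ihb ihc =>
    rw [hleib]; exact add_mem (mul_mem ihb hc) (mul_mem hb ihc)

theorem aux_stable_pow (hleib : ∀ i, ∀ a b : A, δ i (a * b) = δ i a * b + a * δ i b)
    (hx : ∀ i j, δ i (x j) = if i = j then 1 else 0)
    {a : A} (ha : a ∈ Sgen δ x) (i : Fin s) (n : ℕ) : ((δ i)^n) a ∈ Sgen δ x := by
  induction n with
  | zero => simpa using ha
  | succ n ih => rw [pow_succ', Module.End.mul_apply]; exact aux_stable δ x hleib hx ih i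


/-- Truncated Dixmier map. -/
noncomputable def epsF (i : Fin s) (N : ℕ) (a : A) : A :=
  ∑ n ∈ Finset.range (N+1),
    ((-1:K)^n * ((Nat.factorial n : K))⁻¹) • (x i ^ n * ((δ i)^n) a)

theorem aux_epsF_zero (i : Fin s) (N : ℕ) : epsF δ x i N (0:A) = 0 := by
  simp [epsF]

theorem aux_coef (n : ℕ) :
    ((-1:K)^(n+1) * ((Nat.factorial (n+1) : K))⁻¹ * ((n+1 : ℕ) : K))
      = -((-1:K)^n * ((Nat.factorial n : K))⁻¹) := by
  have h1 : ((Nat.factorial n : K)) ≠ 0 := Nat.cast_ne_zero.mpr (Nat.factorial_ne_zero n)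
  have h2 : ((n:K)+1) ≠ 0 := by
    have := Nat.cast_add_one_ne_zero (R := K) n
    simpa using this
  rw [Nat.factorial_succ]
  push_cast
  field_simp
  ring

theorem aux_eps_delta_ne
    (hleib : ∀ i, ∀ a b : A, δ i (a * b) = δ i a * b + a * δ i b)
    (hcomm : ∀ i j, ∀ a : A, δ i (δ j a) = δ j (δ i a))
    (hx : ∀ i j, δ i (x j) = if i = j then 1 else 0)
    {i j : Fin s} (hij : j ≠ i) (N : ℕ) (a : A) :
    δ j (epsF δ x i N a) = epsF δ x i N (δ j a) := by
  unfold epsF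
  rw [map_sum]
  refine Finset.sum_congr rfl (fun n _ => ?_)
  rw [map_smul, hleib, aux_dxpow_ne δ x hleib hx hij, zero_mul, zero_add,
    aux_pow_comm δ hcomm]

theorem aux_eps_mem
    (hleib : ∀ i, ∀ a b : A, δ i (a * b) = δ i a * b + a * δ i b)
    (hx : ∀ i j, δ i (x j) = if i = j then 1 else 0)
    (i : Fin s) (N : ℕ) {a : A} (ha : a ∈ Sgen δ x) :
    epsF δ x i N a ∈ Sgen δ x := by
  unfold epsF
  refine Subalgebra.sum_mem _ (fun n _ => ?_)
  refine Subalgebra.smul_mem _ (mul_mem ?_ (aux_stable_pow δ x hleib hx ha i n)) _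
  exact Subalgebra.pow_mem _ (aux_x_mem δ x i) n

theorem aux_eps_sub_mem
    (hleib : ∀ i, ∀ a b : A, δ i (a * b) = δ i a * b + a * δ i b)
    (hx : ∀ i j, δ i (x j) = if i = j then 1 else 0)
    (i : Fin s) (N : ℕ) {a : A} (ha : δ i a ∈ Sgen δ x) :
    epsF δ x i N a - a ∈ Sgen δ x := by
  unfold epsF
  rw [Finset.sum_range_succ']
  simp only [pow_zero, Nat.factorial_zero, Nat.cast_one, inv_one, mul_one, one_mul,
    Module.End.one_apply, one_smul]
  rw [add_sub_cancel_right]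
  refine Subalgebra.sum_mem _ (fun n _ => ?_)
  refine Subalgebra.smul_mem _ (mul_mem ?_ ?_) _
  · exact Subalgebra.pow_mem _ (aux_x_mem δ x i) (n+1)
  · rw [pow_succ, Module.End.mul_apply]
    exact aux_stable_pow δ x hleib hx ha i n

theorem aux_eps_delta_self
    (hleib : ∀ i, ∀ a b : A, δ i (a * b) = δ i a * b + a * δ i b)
    (hx : ∀ i j, δ i (x j) = if i = j then 1 else 0)
    (i : Fin s) (N : ℕ) {a : A} (hN : ((δ i)^(N+1)) a = 0) :
    δ i (epsF δ x i N a) = 0 := by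
  unfold epsF
  rw [map_sum]
  have hterm : ∀ n, δ i (((-1:K)^n * ((Nat.factorial n : K))⁻¹) • (x i ^ n * ((δ i)^n) a))
      = ((-1:K)^n * ((Nat.factorial n : K))⁻¹) • ((n • x i ^ (n-1)) * ((δ i)^n) a)
        + ((-1:K)^n * ((Nat.factorial n : K))⁻¹) • (x i ^ n * ((δ i)^(n+1)) a) := by
    intro n
    rw [map_smul, hleib, aux_dxpow δ x hleib hx, smul_add, pow_succ', Module.End.mul_apply]
  rw [Finset.sum_congr rfl (fun n _ => hterm n), Finset.sum_add_distrib]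
  have h1 : ∑ n ∈ Finset.range (N+1),
      ((-1:K)^n * ((Nat.factorial n : K))⁻¹) • ((n • x i ^ (n-1)) * ((δ i)^n) a)
      = -∑ n ∈ Finset.range N,
        ((-1:K)^n * ((Nat.factorial n : K))⁻¹) • (x i ^ n * ((δ i)^(n+1)) a) := by
    rw [Finset.sum_range_succ']
    simp only [zero_smul, zero_mul, smul_zero, add_zero, Nat.cast_ofNat]
    rw [← Finset.sum_neg_distrib]
    refine Finset.sum_congr rfl (fun n _ => ?_)
    rw [Nat.add_sub_cancel, smul_mul_assoc, ← Nat.cast_smul_eq_nsmul K, smul_smul,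
      aux_coef, neg_smul]
  have h2 : ∑ n ∈ Finset.range (N+1),
      ((-1:K)^n * ((Nat.factorial n : K))⁻¹) • (x i ^ n * ((δ i)^(n+1)) a)
      = ∑ n ∈ Finset.range N,
        ((-1:K)^n * ((Nat.factorial n : K))⁻¹) • (x i ^ n * ((δ i)^(n+1)) a) := by
    rw [Finset.sum_range_succ]
    have : ((δ i)^(N+1)) a = 0 := hN
    rw [this, mul_zero, smul_zero, add_zero]
  rw [h1, h2, neg_add_cancel]


theorem aux_keystep
    (hleib : ∀ i, ∀ a b : A, δ i (a * b) = δ i a * b + a * δ i b)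
    (hcomm : ∀ i j, ∀ a : A, δ i (δ j a) = δ j (δ i a))
    (hln : ∀ i, ∀ a : A, ∃ n : ℕ, ((δ i) ^ n) a = 0)
    (hx : ∀ i j, δ i (x j) = if i = j then 1 else 0) :
    ∀ (m t : ℕ), s ≤ t + m → ∀ a : A, (∀ j, δ j a ∈ Sgen δ x) →
      (∀ j : Fin s, (j : ℕ) < t → δ j a = 0) → a ∈ Sgen δ x := by
  intro m
  induction m with
  | zero =>
    intro t ht a haS ha0
    exact aux_ker_mem δ x (fun j => ha0 j (lt_of_lt_of_le j.isLt (by omega)))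
  | succ m ih =>
    intro t ht a haS ha0
    by_cases hts : s ≤ t
    · exact aux_ker_mem δ x (fun j => ha0 j (lt_of_lt_of_le j.isLt hts))
    · push_neg at hts
      set i : Fin s := ⟨t, hts⟩ with hi
      obtain ⟨n, hn⟩ := hln i a
      have hn1 : ((δ i)^(n+1)) a = 0 := by
        rw [pow_succ', Module.End.mul_apply, hn, map_zero]
      set a' := epsF δ x i n a with ha'
      have h1 : δ i a' = 0 := aux_eps_delta_self δ x hleib hx i n hn1
      have h2 : ∀ j, δ j a' ∈ Sgen δ x := by
        intro j
        by_cases hji : j = i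
        · rw [hji, h1]; exact zero_mem _
        · rw [ha', aux_eps_delta_ne δ x hleib hcomm hx hji n a]
          exact aux_eps_mem δ x hleib hx i n (haS j)
      have h3 : ∀ j : Fin s, (j:ℕ) < t + 1 → δ j a' = 0 := by
        intro j hj
        by_cases hji : j = i
        · rw [hji]; exact h1
        · have hjt : (j:ℕ) < t := by
            have hne : (j:ℕ) ≠ t := fun h => hji (Fin.ext (by simp [hi, h]))
            omega
          rw [ha', aux_eps_delta_ne δ x hleib hcomm hx hji n a, ha0 j hjt,
            aux_epsF_zero]
      have h4 : a' ∈ Sgen δ x := ih (t+1) (by omega) a' h2 h3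
      have h5 : a' - a ∈ Sgen δ x := aux_eps_sub_mem δ x hleib hx i n (haS i)
      have heq : a = a' - (a' - a) := (sub_sub_cancel a' a).symm
      rw [heq]; exact sub_mem h4 h5


/-- Iterated application of the derivations along a list. -/
def dList (l : List (Fin s)) (a : A) : A := l.foldr (fun i b => δ i b) a

theorem aux_dList_nil (a : A) : dList δ [] a = a := rfl

theorem aux_dList_cons (j : Fin s) (l : List (Fin s)) (a : A) :
    dList δ (j :: l) a = δ j (dList δ l a) := rfl

theorem aux_dList_zero (l : List (Fin s)) : dList δ l (0:A) = 0 := by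
  induction l with
  | nil => rfl
  | cons j t ih => rw [aux_dList_cons, ih, map_zero]

theorem aux_dList_append (l : List (Fin s)) (j : Fin s) (a : A) :
    dList δ (l ++ [j]) a = dList δ l (δ j a) := by
  unfold dList
  rw [List.foldr_append]
  rfl

theorem aux_dList_comm (hcomm : ∀ i j, ∀ a : A, δ i (δ j a) = δ j (δ i a))
    (j : Fin s) (l : List (Fin s)) (a : A) :
    δ j (dList δ l a) = dList δ l (δ j a) := by
  induction l with
  | nil => rfl
  | cons k t ih => rw [aux_dList_cons, aux_dList_cons, hcomm j k, ih]

theorem aux_kill (hcomm : ∀ i j, ∀ a : A, δ i (δ j a) = δ j (δ i a))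
    (i : Fin s) :
    ∀ (l : List (Fin s)) (m : ℕ) (a : A), ((δ i)^m) a = 0 → m ≤ l.count i →
      dList δ l a = 0 := by
  intro l
  induction l with
  | nil =>
    intro m a hm hc
    simp only [List.count_nil, Nat.le_zero] at hc
    subst hc
    simpa [aux_dList_nil] using hm
  | cons j t ih =>
    intro m a hm hc
    by_cases hji : j = i
    · subst hji
      cases m with
      | zero =>
        have : a = 0 := by simpa using hm
        rw [this, aux_dList_zero]
      | succ m =>
        rw [aux_dList_cons, aux_dList_comm δ hcomm]
        refine ih m (δ j a) ?_ ?_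
        · rw [← Module.End.mul_apply, ← pow_succ, hm]
        · have : t.count j + 1 = (j :: t).count j := by
            simp [List.count_cons]
          omega
    · rw [aux_dList_cons]
      have hc' : m ≤ t.count i := by
        rwa [List.count_cons, if_neg (by simpa using hji), add_zero] at hc
      rw [ih m a hm hc', map_zero]

theorem aux_len_eq_sum (l : List (Fin s)) : l.length = ∑ i, l.count i := by
  induction l with
  | nil => simp
  | cons j t ih =>
    simp only [List.length_cons, List.count_cons, ih]
    rw [Finset.sum_add_distrib]
    simp

theorem aux_gen
    (hleib : ∀ i, ∀ a b : A, δ i (a * b) = δ i a * b + a * δ i b)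
    (hcomm : ∀ i j, ∀ a : A, δ i (δ j a) = δ j (δ i a))
    (hln : ∀ i, ∀ a : A, ∃ n : ℕ, ((δ i) ^ n) a = 0)
    (hx : ∀ i j, δ i (x j) = if i = j then 1 else 0) (a : A) :
    a ∈ Sgen δ x := by
  classical
  have main : ∀ n, ∀ a : A, (∀ l : List (Fin s), l.length = n → dList δ l a = 0) →
      a ∈ Sgen δ x := by
    intro n
    induction n with
    | zero =>
      intro a h
      have h0 : a = 0 := h [] rfl
      rw [h0]; exact zero_mem _
    | succ n ih =>
      intro a h
      have haS : ∀ j, δ j a ∈ Sgen δ x := by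
        intro j
        refine ih _ (fun l hl => ?_)
        have := h (l ++ [j]) (by simp [hl])
        rwa [aux_dList_append] at this
      exact aux_keystep δ x hleib hcomm hln hx s 0 (by omega) a haS
        (fun j hj => absurd hj (Nat.not_lt_zero _))
  choose n hn using fun i => hln i a
  refine main (1 + ∑ i, n i) a (fun l hl => ?_)
  have hcount : ∃ i, n i ≤ l.count i := by
    by_contra hcon
    push_neg at hcon
    have h1 : l.length = ∑ i, l.count i := aux_len_eq_sum l
    have h2 : (∑ i, l.count i) + s ≤ ∑ i, n i := by
      have h3 : ∑ i, (l.count i + 1) ≤ ∑ i, n i :=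
        Finset.sum_le_sum (fun i _ => Nat.succ_le_of_lt (hcon i))
      rw [Finset.sum_add_distrib] at h3
      simpa using h3
    omega
  obtain ⟨i, hi⟩ := hcount
  exact aux_kill δ hcomm i l (n i) a (hn i) hi

end Aux


/-- a `K`-algebra automorphism `σ` of `A` commutes with the
derivations `δ_1, …, δ_s` iff `σ (A^δ) = A^δ` and `σ (x i) = x i + λ i` for
some `λ i ∈ A^δ`. -/
theorem stmt11 {K A : Type*} [Field K] [CharZero K] [Ring A] [Algebra K A]
    {s : ℕ} (δ : Fin s → (A →ₗ[K] A))
    (hleib : ∀ i, ∀ a b : A, δ i (a * b) = δ i a * b + a * δ i b)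
    (hcomm : ∀ i j, ∀ a : A, δ i (δ j a) = δ j (δ i a))
    (hln : ∀ i, ∀ a : A, ∃ n : ℕ, ((δ i) ^ n) a = 0)
    (x : Fin s → A)
    (hx : ∀ i j, δ i (x j) = if i = j then 1 else 0)
    (σ : A ≃ₐ[K] A) :
    (∀ i, ∀ a : A, σ (δ i a) = δ i (σ a)) ↔
    (σ '' {a : A | ∀ i, δ i a = 0} = {a : A | ∀ i, δ i a = 0} ∧
     ∀ i, ∃ lam : A, (∀ k, δ k lam = 0) ∧ σ (x i) = x i + lam) := by
  constructor
  · intro h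
    refine ⟨?_, ?_⟩
    · ext a
      constructor
      · rintro ⟨b, hb, rfl⟩ i
        rw [← h i b, hb i, map_zero]
      · intro ha
        refine ⟨σ.symm a, fun i => σ.injective ?_, σ.apply_symm_apply a⟩
        rw [h i, AlgEquiv.apply_symm_apply, ha i, map_zero]
    · intro i
      refine ⟨σ (x i) - x i, fun k => ?_, by abel⟩
      rw [map_sub, ← h k, hx k i]
      split_ifs
      · rw [map_one, sub_self]
      · rw [map_zero, sub_self]
  · rintro ⟨h1, h2⟩ i a
    let T : Subalgebra K A :=
      { carrier := {a : A | ∀ i, σ (δ i a) = δ i (σ a)}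
        mul_mem' := @fun b c hb hc => by
          intro k
          simp only [Set.mem_setOf_eq] at hb hc
          rw [hleib, map_add, map_mul, map_mul, hb k, hc k, map_mul, hleib]
        one_mem' := by
          intro k
          rw [aux_delta_one δ hleib, map_zero, map_one, aux_delta_one δ hleib]
        add_mem' := @fun b c hb hc => by
          intro k
          simp only [Set.mem_setOf_eq] at hb hc
          rw [map_add, map_add, map_add, hb k, hc k, map_add]
        zero_mem' := by
          intro k
          simp only [map_zero]
        algebraMap_mem' := by
          intro r k
          have hz : δ k (algebraMap K A r) = 0 := by
            rw [Algebra.algebraMap_eq_smul_one, map_smul, aux_delta_one δ hleib,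
              smul_zero]
          rw [hz, map_zero, AlgEquiv.commutes, hz] }
    have hST : Sgen δ x ≤ T := by
      apply Algebra.adjoin_le
      rintro b (hb | ⟨j, rfl⟩)
      · intro k
        have hbk : σ b ∈ {a : A | ∀ i, δ i a = 0} := by
          rw [← h1]; exact ⟨b, hb, rfl⟩
        rw [hb k, map_zero, hbk k]
      · intro k
        obtain ⟨lam, hlam, hsx⟩ := h2 j
        rw [hx, hsx, map_add, hx, hlam k, add_zero]
        split_ifs
        · rw [map_one]
        · rw [map_zero]
    exact hST (aux_gen δ x hleib hcomm hln hx a) i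
end

section
/- Let A be a commutative affine domain over a field K of characteristic zero, and suppose there exist K-derivations δ_1, …, δ_s of A and x_1, …, x_s ∈ A with δ_i(x_j) = δ_{ij}, where the δ_i are commuting and locally nilpotent, s equals the Krull dimension of A, and each δ_i is linear over the algebraic closure K̃ of K in A. Then A^δ = K̃ (the integral closure of K in A is exactly the ring of constants), and A = K̃[x_1, …, x_s] is a polynomial ring over the field K̃. -/
set_option synthInstance.maxHeartbeats 1000000
set_option maxHeartbeats 1600000

open Polynomial Finset

namespace Stmt19Aux

open scoped Classical

set_option linter.unusedSectionVars false

variable {K A : Type*} [Field K] [CharZero K] [CommRing A] [Algebra K A]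

theorem delta_one (D : A →ₗ[K] A) (hD : ∀ a b : A, D (a*b) = D a * b + a * D b) :
    D 1 = 0 := by
  have h := hD 1 1
  simp only [one_mul, mul_one] at h
  exact (left_eq_add.mp h)

theorem pow_apply_zero_of_le (D : A →ₗ[K] A) {a : A} {m n : ℕ} (h : m ≤ n)
    (hm : (D^m) a = 0) : (D^n) a = 0 := by
  rw [← Nat.sub_add_cancel h, pow_add, Module.End.mul_apply, hm, map_zero]

theorem D_pow (D : A →ₗ[K] A) (hD : ∀ a b : A, D (a*b) = D a * b + a * D b)
    (u : A) : ∀ k : ℕ, D (u^(k+1)) = (k+1) • (u^k * D u) := by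
  intro k
  induction k with
  | zero => simp
  | succ k ih =>
    have h2 : u ^ (k+2) = u * u^(k+1) := by ring
    rw [h2, hD, ih]
    have e : u * (u ^ k * D u) = u ^ (k+1) * D u := by ring
    have e2 : D u * u ^ (k+1) = u ^ (k+1) * D u := mul_comm _ _
    rw [succ_nsmul, mul_add, mul_smul_comm, e, e2, succ_nsmul, succ_nsmul]
    abel

theorem iter_leibniz (D : A →ₗ[K] A) (hD : ∀ a b : A, D (a*b) = D a * b + a * D b) :
    ∀ (n : ℕ) (p q : A), (D^n) (p*q) =
      ∑ k ∈ range (n+1), n.choose k • ((D^(n-k)) p * (D^k) q) := by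
  intro n
  induction n with
  | zero => simp
  | succ n IH =>
    intro p q
    calc
      (D^(n + 1)) (p * q) =
          D (∑ k ∈ range (n+1), n.choose k • ((D^(n - k)) p * (D^k) q)) := by
        rw [pow_succ', Module.End.mul_apply, IH]
      _ = (∑ k ∈ range (n+1), n.choose k • ((D^(n - k + 1)) p * (D^k) q)) +
          ∑ k ∈ range (n+1), n.choose k • ((D^(n - k)) p * (D^(k + 1)) q) := by
        rw [map_sum]
        rw [← sum_add_distrib]
        refine sum_congr rfl fun k _ => ?_
        rw [map_nsmul, hD, smul_add]
        congr 2 <;> rw [pow_succ', Module.End.mul_apply]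
      _ = (∑ k ∈ range (n+1), n.choose k.succ • ((D^(n - k)) p * (D^(k + 1)) q)) +
              1 • ((D^(n + 1)) p * (D^0) q) +
            ∑ k ∈ range (n+1), n.choose k • ((D^(n - k)) p * (D^(k + 1)) q) := ?_
      _ = ((∑ k ∈ range (n+1), n.choose k • ((D^(n - k)) p * (D^(k + 1)) q)) +
              ∑ k ∈ range (n+1), n.choose k.succ • ((D^(n - k)) p * (D^(k + 1)) q)) +
            1 • ((D^(n + 1)) p * (D^0) q) := by
        rw [add_comm, add_assoc]
      _ = (∑ i ∈ range (n+1),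
              (n + 1).choose (i + 1) • ((D^(n + 1 - (i + 1))) p * (D^(i + 1)) q)) +
            1 • ((D^(n + 1)) p * (D^0) q) := by
        simp_rw [Nat.choose_succ_succ, Nat.succ_sub_succ, add_smul, sum_add_distrib]
      _ = ∑ k ∈ range (n+1+1), (n+1).choose k • ((D^(n+1 - k)) p * (D^k) q) := by
        rw [sum_range_succ' _ (n+1), Nat.choose_zero_right, tsub_zero]
    congr
    refine (sum_range_succ' _ _).trans (congr_arg₂ (· + ·) ?_ ?_)
    · rw [sum_range_succ, Nat.choose_succ_self, zero_smul, add_zero]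
      refine sum_congr rfl fun k hk => ?_
      rw [mem_range] at hk
      congr
      omega
    · rw [Nat.choose_zero_right, tsub_zero]


variable (D : A →ₗ[K] A)

/-- the Taylor-coefficient polynomial `∑ k, (D^k a / k!) X^k`. -/
noncomputable def rho (hln : ∀ a : A, ∃ n : ℕ, (D^n) a = 0) (a : A) : A[X] :=
  ∑ k ∈ range (Nat.find (hln a)), Polynomial.monomial k ((k.factorial : K)⁻¹ • (D^k) a)

theorem aux_coeff (N : ℕ) (c : ℕ → A) (j : ℕ) :
    (∑ k ∈ range N, (Polynomial.monomial k (c k) : A[X])).coeff j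
      = if j < N then c j else 0 := by
  rw [Polynomial.finset_sum_coeff]
  simp only [Polynomial.coeff_monomial]
  rw [Finset.sum_ite_eq' (range N) j c]
  simp [Finset.mem_range]

theorem coeff_rho (hln : ∀ a : A, ∃ n : ℕ, (D^n) a = 0) (a : A) (j : ℕ) :
    (rho D hln a).coeff j = (j.factorial : K)⁻¹ • (D^j) a := by
  rw [rho, aux_coeff]
  split_ifs with h
  · rfl
  · rw [pow_apply_zero_of_le D (Nat.le_of_not_lt h) (Nat.find_spec (hln a)), smul_zero]

theorem rho_eq_sum (hln : ∀ a : A, ∃ n : ℕ, (D^n) a = 0) {a : A} {N : ℕ}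
    (hN : (D^N) a = 0) :
    rho D hln a = ∑ k ∈ range N, Polynomial.monomial k ((k.factorial : K)⁻¹ • (D^k) a) := by
  ext j
  rw [coeff_rho, aux_coeff]
  split_ifs with h
  · rfl
  · rw [pow_apply_zero_of_le D (Nat.le_of_not_lt h) hN, smul_zero]

theorem rho_add (hln : ∀ a : A, ∃ n : ℕ, (D^n) a = 0) (a b : A) :
    rho D hln (a + b) = rho D hln a + rho D hln b := by
  ext j
  simp only [Polynomial.coeff_add, coeff_rho, map_add, smul_add]

theorem rho_zero (hln : ∀ a : A, ∃ n : ℕ, (D^n) a = 0) :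
    rho D hln 0 = 0 := by
  ext j
  simp [coeff_rho]

theorem rho_one (hD : ∀ a b : A, D (a*b) = D a * b + a * D b)
    (hln : ∀ a : A, ∃ n : ℕ, (D^n) a = 0) :
    rho D hln 1 = 1 := by
  ext j
  rw [coeff_rho]
  cases j with
  | zero => simp
  | succ j =>
    rw [Polynomial.coeff_one]
    have : (D^(j+1)) (1:A) = 0 := by
      rw [pow_succ, Module.End.mul_apply, delta_one D hD, map_zero]
    simp [this]

theorem fact_inv_eq (n k : ℕ) (hk : k ≤ n) :
    (n.factorial : K)⁻¹ * (n.choose k : K)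
      = (k.factorial : K)⁻¹ * ((n-k).factorial : K)⁻¹ := by
  have h := Nat.choose_mul_factorial_mul_factorial hk
  have hK : (n.choose k : K) * (k.factorial : K) * ((n-k).factorial : K) = (n.factorial : K) := by
    exact_mod_cast congrArg (Nat.cast : ℕ → K) h
  have h1 : (n.factorial : K) ≠ 0 := Nat.cast_ne_zero.mpr (Nat.factorial_ne_zero n)
  have h2 : (k.factorial : K) ≠ 0 := Nat.cast_ne_zero.mpr (Nat.factorial_ne_zero k)
  have h3 : ((n-k).factorial : K) ≠ 0 := Nat.cast_ne_zero.mpr (Nat.factorial_ne_zero (n-k))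
  rw [inv_mul_eq_div, div_eq_iff h1, ← hK]
  field_simp

theorem rho_mul (hD : ∀ a b : A, D (a*b) = D a * b + a * D b)
    (hln : ∀ a : A, ∃ n : ℕ, (D^n) a = 0) (a b : A) :
    rho D hln (a * b) = rho D hln a * rho D hln b := by
  ext n
  rw [coeff_rho, Polynomial.coeff_mul, iter_leibniz D hD n]
  rw [Finset.Nat.sum_antidiagonal_eq_sum_range_succ_mk, Finset.smul_sum]
  rw [← Finset.sum_range_reflect]
  refine sum_congr rfl fun k hk => ?_
  rw [mem_range, Nat.lt_succ_iff] at hk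
  have e1 : n + 1 - 1 - k = n - k := by omega
  rw [e1, Nat.sub_sub_self hk, Nat.choose_symm hk]
  rw [coeff_rho, coeff_rho, smul_mul_smul_comm]
  rw [← Nat.cast_smul_eq_nsmul K, smul_smul]
  congr 1
  exact fact_inv_eq n k hk

/-- `rho` as a ring hom. -/
noncomputable def rhoHom (hD : ∀ a b : A, D (a*b) = D a * b + a * D b)
    (hln : ∀ a : A, ∃ n : ℕ, (D^n) a = 0) : A →+* A[X] where
  toFun := rho D hln
  map_one' := rho_one D hD hln
  map_mul' := rho_mul D hD hln
  map_zero' := rho_zero D hln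
  map_add' := rho_add D hln

/-- Dixmier projection: `a ↦ ∑ k, (D^k a/k!)(-x)^k`. -/
noncomputable def dix (hD : ∀ a b : A, D (a*b) = D a * b + a * D b)
    (hln : ∀ a : A, ∃ n : ℕ, (D^n) a = 0) (x : A) : A →+* A :=
  (Polynomial.evalRingHom (-x)).comp (rhoHom D hD hln)


variable (hD : ∀ a b : A, D (a*b) = D a * b + a * D b)
    (hln : ∀ a : A, ∃ n : ℕ, (D^n) a = 0) (x : A)

theorem dix_eq_sum {a : A} {N : ℕ} (hN : (D^N) a = 0) :
    dix D hD hln x a = ∑ k ∈ range N, ((k.factorial : K)⁻¹ • (D^k) a) * (-x)^k := by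
  show (Polynomial.evalRingHom (-x)) (rho D hln a) = _
  rw [rho_eq_sum D hln hN]
  rw [map_sum]
  refine sum_congr rfl fun k _ => ?_
  simp [Polynomial.eval_monomial]

theorem dix_of_ker {a : A} (h : D a = 0) : dix D hD hln x a = a := by
  have h1 : (D^1) a = 0 := by rwa [pow_one]
  rw [dix_eq_sum D hD hln x h1]
  simp

theorem dix_x (hx : D x = 1) : dix D hD hln x x = 0 := by
  have h2 : (D^2) x = 0 := by
    rw [show (2:ℕ) = 1 + 1 from rfl, pow_add, Module.End.mul_apply, pow_one, hx,
      delta_one D hD]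
  rw [dix_eq_sum D hD hln x h2]
  rw [sum_range_succ, sum_range_succ, sum_range_zero]
  simp [hx]

theorem D_dix (hx : D x = 1) (a : A) : D (dix D hD hln x a) = 0 := by
  obtain ⟨N, hN⟩ := hln a
  rcases N with _ | M
  · have ha : a = 0 := by simpa using hN
    simp [ha, map_zero]
  · set S1 : ℕ → A := fun k => ((k.factorial : K)⁻¹ • (D^(k+1)) a) * (-x)^k with hS1
    set S2 : ℕ → A := fun k => ((k.factorial : K)⁻¹ • (D^k) a) * D ((-x)^k) with hS2
    have hDx : D (-x) = -1 := by rw [map_neg, hx]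
    have hsum : D (dix D hD hln x a)
        = ∑ k ∈ range (M+1), S1 k + ∑ k ∈ range (M+1), S2 k := by
      rw [dix_eq_sum D hD hln x hN, map_sum, ← sum_add_distrib]
      refine sum_congr rfl fun k _ => ?_
      rw [hD]
      congr 2
      rw [map_smul, pow_succ', Module.End.mul_apply]
    have h1 : ∑ k ∈ range (M+1), S1 k = ∑ k ∈ range M, S1 k := by
      rw [sum_range_succ]
      have : S1 M = 0 := by rw [hS1]; simp only; rw [hN, smul_zero, zero_mul]
      rw [this, add_zero]
    have h2 : ∑ k ∈ range (M+1), S2 k = ∑ k ∈ range M, S2 (k+1) := by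
      rw [sum_range_succ' S2 M]
      have : S2 0 = 0 := by
        rw [hS2]; simp only [pow_zero, delta_one D hD, mul_zero]
      rw [this, add_zero]
    have hterm : ∀ k : ℕ, S2 (k+1) = - S1 k := by
      intro k
      rw [hS1, hS2]
      simp only
      rw [D_pow D hD (-x) k, hDx]
      have e2 : (-x)^k * (-1 : A) = -((-x)^k) := by ring
      rw [e2, smul_neg, mul_neg]
      rw [← Nat.cast_smul_eq_nsmul K (k+1) ((-x)^k : A), smul_mul_smul_comm]
      rw [smul_mul_assoc]
      congr 2
      rw [Nat.factorial_succ, Nat.cast_mul]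
      have hk1 : ((k+1 : ℕ) : K) ≠ 0 := Nat.cast_ne_zero.mpr (Nat.succ_ne_zero k)
      have hkf : (k.factorial : K) ≠ 0 := Nat.cast_ne_zero.mpr (Nat.factorial_ne_zero k)
      have hk1' : ((k : K) + 1) ≠ 0 := by exact_mod_cast hk1
      field_simp
    rw [hsum, h1, h2, ← sum_add_distrib]
    refine Finset.sum_eq_zero fun k _ => ?_
    rw [hterm k, add_neg_cancel]


theorem E_pow_comm (E : A →ₗ[K] A) (hED : ∀ a : A, E (D a) = D (E a)) :
    ∀ (k : ℕ) (a : A), E ((D^k) a) = (D^k) (E a) := by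
  intro k
  induction k with
  | zero => intro a; simp
  | succ k ih =>
    intro a
    rw [pow_succ, Module.End.mul_apply, Module.End.mul_apply, ih (D a), hED]

theorem E_pow_x (E : A →ₗ[K] A) (hE : ∀ a b : A, E (a*b) = E a * b + a * E b)
    (hEx : E x = 0) : ∀ k : ℕ, E ((-x)^k) = 0 := by
  intro k
  cases k with
  | zero => rw [pow_zero]; exact delta_one E hE
  | succ k =>
    rw [D_pow E hE (-x) k, map_neg, hEx, neg_zero, mul_zero, smul_zero]

/-- `dix` commutes with any derivation commuting with `D` and killing `x`. -/
theorem dix_comm (E : A →ₗ[K] A) (hE : ∀ a b : A, E (a*b) = E a * b + a * E b)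
    (hEx : E x = 0) (hED : ∀ a : A, E (D a) = D (E a)) (a : A) :
    E (dix D hD hln x a) = dix D hD hln x (E a) := by
  obtain ⟨N, hN⟩ := hln a
  have hN' : (D^N) (E a) = 0 := by
    rw [← E_pow_comm D E hED, hN, map_zero]
  rw [dix_eq_sum D hD hln x hN, dix_eq_sum D hD hln x hN', map_sum]
  refine sum_congr rfl fun k _ => ?_
  rw [hE, E_pow_x x E hE hEx k, mul_zero, add_zero]
  rw [map_smul, E_pow_comm D E hED]

theorem dix_algebraMap (r : K) :
    dix D hD hln x (algebraMap K A r) = algebraMap K A r := by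
  refine dix_of_ker D hD hln x ?_
  rw [Algebra.algebraMap_eq_smul_one, map_smul, delta_one D hD, smul_zero]

/-- Taylor's formula. -/
theorem dix_taylor (hx : D x = 1) (a : A) {N : ℕ} (hN : (D^N) a = 0) :
    a = ∑ k ∈ range N, (k.factorial : K)⁻¹ • (dix D hD hln x ((D^k) a) * x ^ k) := by
  rcases N with _ | M
  · have ha : a = 0 := by simpa using hN
    simp [ha]
  set p : A[X] := rho D hln a with hp
  -- `hasseDeriv k p = k!⁻¹ • rho (D^k a)`
  have hhd : ∀ k : ℕ, Polynomial.hasseDeriv k p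
      = (k.factorial : K)⁻¹ • rho D hln ((D^k) a) := by
    intro k
    ext n
    rw [Polynomial.hasseDeriv_coeff, Polynomial.coeff_smul, coeff_rho, coeff_rho]
    rw [← Module.End.mul_apply, ← pow_add, ← nsmul_eq_mul, ← Nat.cast_smul_eq_nsmul K]
    rw [smul_smul, smul_smul]
    congr 1
    rw [mul_comm, fact_inv_eq (n+k) k (Nat.le_add_left k n), Nat.add_sub_cancel]
  -- natDegree bound
  have hdeg : p.natDegree < M + 1 := by
    have : p.natDegree ≤ M := by
      rw [hp, rho_eq_sum D hln hN]
      refine Polynomial.natDegree_sum_le_of_forall_le _ _ fun k hk => ?_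
      refine le_trans (Polynomial.natDegree_monomial_le _) ?_
      exact Nat.lt_succ_iff.mp (mem_range.mp hk)
    omega
  have hdeg2 : (Polynomial.taylor (-x) p).natDegree < M + 1 := by
    rwa [Polynomial.natDegree_taylor]
  have heval : (Polynomial.taylor (-x) p).eval x = a := by
    rw [Polynomial.taylor_eval, add_neg_cancel, ← Polynomial.coeff_zero_eq_eval_zero]
    rw [hp, coeff_rho]
    simp
  conv_lhs => rw [← heval, Polynomial.eval_eq_sum_range' hdeg2 x]
  refine sum_congr rfl fun k _ => ?_
  rw [Polynomial.taylor_coeff, hhd k, Polynomial.eval_smul, smul_mul_assoc]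
  rfl


/-- iterated composition `Φ (k-1) ∘ ... ∘ Φ 0`. -/
noncomputable def compSeq {A : Type*} [CommRing A] (Φ : ℕ → A →+* A) : ℕ → A →+* A
  | 0 => RingHom.id A
  | (k+1) => (Φ k).comp (compSeq Φ k)

@[simp] theorem compSeq_zero {A : Type*} [CommRing A] (Φ : ℕ → A →+* A) :
    compSeq Φ 0 = RingHom.id A := rfl

@[simp] theorem compSeq_succ {A : Type*} [CommRing A] (Φ : ℕ → A →+* A) (k : ℕ) (a : A) :
    compSeq Φ (k+1) a = Φ k (compSeq Φ k a) := rfl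


theorem coeff_pderiv {R σ : Type*} [CommSemiring R] [DecidableEq σ] (i : σ)
    (p : MvPolynomial σ R) (m : σ →₀ ℕ) :
    (MvPolynomial.pderiv i p).coeff m = (m i + 1) • p.coeff (m + Finsupp.single i 1) := by
  induction p using MvPolynomial.induction_on' with
  | monomial d a =>
    rw [MvPolynomial.pderiv_monomial, MvPolynomial.coeff_monomial, MvPolynomial.coeff_monomial]
    by_cases hd : d = m + Finsupp.single i 1
    · subst hd
      rw [if_pos (add_tsub_cancel_right _ _), if_pos rfl]
      rw [Finsupp.add_apply, Finsupp.single_eq_same, nsmul_eq_mul]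
      push_cast
      ring
    · rw [if_neg hd, smul_zero]
      by_cases h2 : d - Finsupp.single i 1 = m
      · by_cases h3 : d i = 0
        · rw [if_pos h2, h3, Nat.cast_zero, mul_zero]
        · exfalso
          apply hd
          rw [← h2, tsub_add_cancel_of_le]
          rw [Finsupp.single_le_iff]
          omega
      · rw [if_neg h2]
  | add p q ihp ihq =>
    rw [map_add, MvPolynomial.coeff_add, ihp, ihq, MvPolynomial.coeff_add, smul_add]

end Stmt19Aux








/-- let `A` be a commutative affine domain over `K` (char 0) of
Krull dimension `s ≥ 1`, with pairwise commuting locally nilpotent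
`K̃`-linear derivations `δ_1, …, δ_s` (where `K̃ = integralClosure K A` is the
algebraic closure of `K` in `A`) and elements `x_1, …, x_s` with
`δ_i x_j = δ_{ij}`. Then `A^δ = K̃` and `A = K̃[x_1, …, x_s]` is a polynomial
ring over the field `K̃` (the `x_i` are algebraically independent over `K̃` and
generate `A` over `K̃`). -/
theorem stmt19 {K A : Type*} [Field K] [CharZero K] [CommRing A] [IsDomain A]
    [Algebra K A] [Algebra.FiniteType K A]
    {s : ℕ} (hs : 1 ≤ s) (hdim : ringKrullDim A = s)
    (δ : Fin s → (A →ₗ[K] A))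
    (hleib : ∀ i, ∀ a b : A, δ i (a * b) = δ i a * b + a * δ i b)
    (hcomm : ∀ i j, ∀ a : A, δ i (δ j a) = δ j (δ i a))
    (hln : ∀ i, ∀ a : A, ∃ n : ℕ, ((δ i) ^ n) a = 0)
    (hKt : ∀ i, ∀ c ∈ integralClosure K A, ∀ a : A, δ i (c * a) = c * δ i a)
    (x : Fin s → A)
    (hx : ∀ i j, δ i (x j) = if i = j then 1 else 0) :
    (∀ a : A, (∀ i, δ i a = 0) ↔ a ∈ integralClosure K A) ∧
    AlgebraicIndependent (↥(integralClosure K A)) x ∧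
    Algebra.adjoin (↥(integralClosure K A)) (Set.range x) = ⊤ := by
  classical
  haveI : CharZero A := charZero_of_injective_algebraMap (algebraMap K A).injective
  -- basic facts about the derivations
  have hδ1 : ∀ i, δ i (1 : A) = 0 := fun i => Stmt19Aux.delta_one (δ i) (hleib i)
  have hδalg : ∀ i (r : K), δ i (algebraMap K A r) = 0 := by
    intro i r
    rw [Algebra.algebraMap_eq_smul_one, map_smul, hδ1, smul_zero]
  have hδKt : ∀ i, ∀ c ∈ integralClosure K A, δ i c = 0 := by
    intro i c hc
    have h := hKt i c hc 1
    rw [mul_one, hδ1, mul_zero] at h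
    exact h
  have hxx : ∀ i, δ i (x i) = 1 := fun i => by rw [hx i i, if_pos rfl]
  have hxne : ∀ i j, i ≠ j → δ i (x j) = 0 := fun i j h => by rw [hx i j, if_neg h]
  -- the Dixmier projections
  set Φ : Fin s → (A →+* A) :=
    fun i => Stmt19Aux.dix (δ i) (hleib i) (hln i) (x i) with hΦdef
  have hΦfix : ∀ i (a : A), δ i a = 0 → Φ i a = a :=
    fun i a h => Stmt19Aux.dix_of_ker (δ i) (hleib i) (hln i) (x i) h
  have hΦx : ∀ i, Φ i (x i) = 0 :=
    fun i => Stmt19Aux.dix_x (δ i) (hleib i) (hln i) (x i) (hxx i)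
  have hΦker : ∀ i (a : A), δ i (Φ i a) = 0 :=
    fun i a => Stmt19Aux.D_dix (δ i) (hleib i) (hln i) (x i) (hxx i) a
  have hΦcomm : ∀ i j, j ≠ i → ∀ a : A, δ j (Φ i a) = Φ i (δ j a) := by
    intro i j hji a
    exact Stmt19Aux.dix_comm (δ i) (hleib i) (hln i) (x i) (δ j) (hleib j)
      (hxne j i hji) (fun b => hcomm j i b) a
  -- iterated projections
  set Φ' : ℕ → (A →+* A) :=
    fun k => if h : k < s then Φ ⟨k, h⟩ else RingHom.id A with hΦ'def
  set Ψ : ℕ → (A →+* A) := Stmt19Aux.compSeq Φ' with hΨdef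
  have hΨsucc : ∀ (k : ℕ) (a : A), Ψ (k+1) a = Φ' k (Ψ k a) := fun k a => rfl
  -- (1) `Ψ k a` is killed by the first `k` derivations
  have hΨker : ∀ (k : ℕ) (j : Fin s), (j : ℕ) < k → ∀ a : A, δ j (Ψ k a) = 0 := by
    intro k
    induction k with
    | zero => intro j hj; omega
    | succ k ih =>
      intro j hj a
      rw [hΨsucc]
      by_cases hks : k < s
      · rw [hΦ'def]; simp only [dif_pos hks]
        rcases Nat.lt_succ_iff_lt_or_eq.mp hj with h | h
        · have hne : j ≠ ⟨k, hks⟩ := by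
            intro he; rw [he] at h; exact absurd h (lt_irrefl _)
          rw [hΦcomm ⟨k, hks⟩ j hne, ih j h, map_zero]
        · have : j = ⟨k, hks⟩ := by ext; exact h
          rw [this]; exact hΦker _ _
      · rw [hΦ'def]; simp only [dif_neg hks, RingHom.id_apply]
        exact ih j (by omega) a
  -- (2) `Ψ k` fixes joint constants
  have hΨfix : ∀ (k : ℕ) (a : A), (∀ j : Fin s, (j : ℕ) < k → δ j a = 0) → Ψ k a = a := by
    intro k
    induction k with
    | zero => intro a _; rfl
    | succ k ih =>
      intro a ha
      rw [hΨsucc, ih a (fun j hj => ha j (by omega))]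
      by_cases hks : k < s
      · rw [hΦ'def]; simp only [dif_pos hks]
        exact hΦfix _ _ (ha ⟨k, hks⟩ (by simp))
      · rw [hΦ'def]; simp only [dif_neg hks, RingHom.id_apply]
  -- (3) x j is fixed by Ψ k for k ≤ j, killed by Ψ (j+1)
  have hΨx : ∀ (j : Fin s) (k : ℕ), k ≤ (j : ℕ) → Ψ k (x j) = x j := by
    intro j k hk
    refine hΨfix k (x j) fun i hi => hxne i j ?_
    intro he; rw [he] at hi; omega
  have hΨxzero : ∀ (j : Fin s), Ψ ((j : ℕ)+1) (x j) = 0 := by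
    intro j
    rw [hΨsucc, hΨx j (j : ℕ) le_rfl, hΦ'def]
    simp only [dif_pos j.isLt, Fin.eta]
    exact hΦx j
  -- (4) kernels increase
  have hΨmono : ∀ (k : ℕ) (a : A), Ψ k a = 0 → Ψ (k+1) a = 0 := by
    intro k a h
    rw [hΨsucc, h, map_zero]
  have hxnz : ∀ j : Fin s, x j ≠ 0 := by
    intro j hj
    have := hxx j
    rw [hj, map_zero] at this
    exact one_ne_zero this.symm
  -- the full projection
  have hψconst : ∀ a : A, ∀ i : Fin s, δ i (Ψ s a) = 0 := fun a i => hΨker s i i.isLt a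
  -- algebra-hom version of Ψ s
  set ψa : A →ₐ[K] A :=
    { toRingHom := Ψ s,
      commutes' := fun r => hΨfix s (algebraMap K A r) (fun j _ => hδalg j r) } with hψadef
  set B : Subalgebra K A := ψa.range with hBdef
  have hBmem : ∀ a : A, a ∈ B ↔ (∀ i, δ i a = 0) := by
    intro a
    constructor
    · rintro ⟨b, rfl⟩ i
      exact hψconst b i
    · intro h
      exact ⟨a, hΨfix s a (fun j _ => h j)⟩
  haveI : Nontrivial B := nontrivial_of_ne 0 1 (fun h => zero_ne_one (congrArg Subtype.val h))
  -- B is a field, otherwise there is a chain of primes of length s+1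
  have hBfield : IsField B := by
    by_contra hnf
    obtain ⟨p, hp0, hpprime⟩ := Ring.not_isField_iff_exists_prime.mp hnf
    obtain ⟨b0, hb0p, hb0ne⟩ := Submodule.exists_mem_ne_zero_of_ne_bot hp0
    haveI := hpprime
    set f : A →+* (B ⧸ p) := (Ideal.Quotient.mk p).comp ψa.rangeRestrict.toRingHom with hfdef
    set q : Ideal A := RingHom.ker f with hqdef
    haveI hqprime : q.IsPrime := RingHom.ker_isPrime f
    have hkerprime : ∀ k : ℕ, (RingHom.ker (Ψ k)).IsPrime := fun k => RingHom.ker_isPrime _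
    have hstrict : ∀ (j : Fin s), RingHom.ker (Ψ (j : ℕ)) < RingHom.ker (Ψ ((j : ℕ)+1)) := by
      intro j
      rw [SetLike.lt_iff_le_and_exists]
      refine ⟨fun a ha => ?_, x j, ?_, ?_⟩
      · rw [RingHom.mem_ker] at ha ⊢
        exact hΨmono _ _ ha
      · rw [RingHom.mem_ker]; exact hΨxzero j
      · rw [RingHom.mem_ker, hΨx j (j : ℕ) le_rfl]
        exact hxnz j
    have hfix0 : ∀ b : A, b ∈ B → Ψ s b = b := by
      intro b hb
      exact hΨfix s b (fun j _ => (hBmem b).mp hb j)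
    have htop : RingHom.ker (Ψ s) < q := by
      rw [SetLike.lt_iff_le_and_exists]
      refine ⟨fun a ha => ?_, (b0 : A), ?_, ?_⟩
      · rw [RingHom.mem_ker] at ha ⊢
        rw [hfdef, RingHom.comp_apply]
        have h1 : ψa.rangeRestrict.toRingHom a = 0 := by
          apply Subtype.ext
          exact ha
        rw [h1, map_zero]
      · rw [RingHom.mem_ker, hfdef, RingHom.comp_apply]
        have h1 : ψa.rangeRestrict.toRingHom (b0 : A) = b0 := by
          apply Subtype.ext
          exact hfix0 (b0 : A) b0.2
        rw [h1, Ideal.Quotient.eq_zero_iff_mem]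
        exact hb0p
      · rw [RingHom.mem_ker, hfix0 (b0 : A) b0.2]
        intro h
        exact hb0ne (Subtype.ext h)
    -- assemble an LTSeries of length s+1
    set P : Fin (s+2) → PrimeSpectrum A := fun j =>
      if h : (j : ℕ) < s + 1 then ⟨RingHom.ker (Ψ (j : ℕ)), hkerprime (j : ℕ)⟩
        else ⟨q, hqprime⟩ with hPdef
    have hstep : ∀ j : Fin (s+1), P j.castSucc < P j.succ := by
      intro j
      have hcast : ((j.castSucc : Fin (s+2)) : ℕ) = (j : ℕ) := rfl
      have hsuccv : ((j.succ : Fin (s+2)) : ℕ) = (j : ℕ) + 1 := rfl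
      have hjlt : (j : ℕ) < s + 1 := j.isLt
      rcases Nat.lt_or_ge (j : ℕ) s with hlt | hge
      · have h1 : P j.castSucc = ⟨RingHom.ker (Ψ (j : ℕ)), hkerprime (j : ℕ)⟩ := by
          rw [hPdef]; simp only [hcast, dif_pos hjlt]
        have h2 : P j.succ = ⟨RingHom.ker (Ψ ((j : ℕ)+1)), hkerprime _⟩ := by
          rw [hPdef]; simp only [hsuccv, dif_pos (by omega : (j : ℕ) + 1 < s + 1)]
        rw [h1, h2]
        exact hstrict ⟨(j : ℕ), hlt⟩
      · have hjs : (j : ℕ) = s := by omega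
        have h1 : P j.castSucc = ⟨RingHom.ker (Ψ s), hkerprime s⟩ := by
          rw [hPdef]; simp only [hcast, hjs]; rw [dif_pos (by omega : s < s + 1)]
        have h2 : P j.succ = ⟨q, hqprime⟩ := by
          rw [hPdef]; simp only [hsuccv, hjs]
          rw [dif_neg (by omega)]
        rw [h1, h2]
        exact htop
    set c : LTSeries (PrimeSpectrum A) := ⟨s+1, P, hstep⟩ with hcdef
    have hle := Order.LTSeries.length_le_krullDim c
    have hlen : c.length = s + 1 := rfl
    have h2 : ((s + 1 : ℕ) : WithBot (WithTop ℕ)) ≤ ringKrullDim A := by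
      rw [← hlen]; exact hle
    rw [hdim] at h2
    have : s + 1 ≤ s := by exact Nat.cast_le.mp h2
    omega
  -- Zariski: B is finite over K, hence integral
  letI : Field B := hBfield.toField
  haveI hBft : Algebra.FiniteType K B :=
    Algebra.FiniteType.of_surjective ψa.rangeRestrict
      ψa.rangeRestrict_surjective
  haveI : Module.Finite K B := finite_of_finite_type_of_isJacobsonRing K B
  haveI : Algebra.IsIntegral K B := Algebra.IsIntegral.of_finite K B
  have hforward : ∀ a : A, (∀ i, δ i a = 0) → a ∈ integralClosure K A := by
    intro a ha
    have haB : a ∈ B := (hBmem a).mpr ha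
    have h1 : IsIntegral K (B.val ⟨a, haB⟩) :=
      IsIntegral.map B.val (Algebra.IsIntegral.isIntegral _)
    exact h1
  have hpart1 : ∀ a : A, (∀ i, δ i a = 0) ↔ a ∈ integralClosure K A :=
    fun a => ⟨hforward a, fun h i => hδKt i a h⟩
  haveI : Nontrivial ↥(integralClosure K A) :=
    nontrivial_of_ne 0 1 (fun h => zero_ne_one (congrArg Subtype.val h))
  haveI : CharZero ↥(integralClosure K A) :=
    charZero_of_injective_algebraMap (algebraMap K ↥(integralClosure K A)).injective
  -- the chain rule
  have hchain : ∀ (i : Fin s) (p : MvPolynomial (Fin s) ↥(integralClosure K A)),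
      δ i (MvPolynomial.aeval x p) = MvPolynomial.aeval x (MvPolynomial.pderiv i p) := by
    intro i p
    induction p using MvPolynomial.induction_on with
    | C c =>
      rw [MvPolynomial.aeval_C, MvPolynomial.pderiv_C, map_zero]
      exact hδKt i _ c.2
    | add p q hp hq =>
      rw [map_add (MvPolynomial.aeval x) p q, map_add (δ i), hp, hq,
        map_add (MvPolynomial.pderiv i), map_add (MvPolynomial.aeval x)]
    | mul_X p j hp =>
      rw [map_mul, MvPolynomial.aeval_X, hleib i, hp, MvPolynomial.pderiv_mul, map_add,
        map_mul, MvPolynomial.aeval_X]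
      congr 1
      by_cases hij : i = j
      · subst hij
        rw [MvPolynomial.pderiv_X_self, mul_one, hxx i, mul_one]
      · rw [MvPolynomial.pderiv_X_of_ne (fun h => hij h.symm), mul_zero, map_zero,
          hxne i j hij, mul_zero]
  -- `p = C (coeff 0 p)` helper
  have hCC : ∀ p : MvPolynomial (Fin s) ↥(integralClosure K A),
      (∀ m, m ≠ 0 → p.coeff m = 0) → p = MvPolynomial.C (p.coeff 0) := by
    intro p h
    apply MvPolynomial.ext
    intro m
    rw [MvPolynomial.coeff_C]
    by_cases hm : (0 : Fin s →₀ ℕ) = m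
    · rw [if_pos hm, ← hm]
    · rw [if_neg hm]
      exact h m (fun he => hm he.symm)
  have hval : Function.Injective (algebraMap ↥(integralClosure K A) A) :=
    Subtype.val_injective
  -- main induction for algebraic independence
  have hzero : ∀ (n : ℕ) (p : MvPolynomial (Fin s) ↥(integralClosure K A)),
      p.totalDegree ≤ n → MvPolynomial.aeval x p = 0 → p = 0 := by
    intro n
    induction n with
    | zero =>
      intro p hdeg hev
      have h0 : ∀ m ∈ p.support, ∀ j, m j = 0 :=
        (MvPolynomial.totalDegree_eq_zero_iff _ p).mp (Nat.le_zero.mp hdeg)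
      have hp : p = MvPolynomial.C (p.coeff 0) := by
        refine hCC p fun m hm => ?_
        by_contra hc
        exact hm (Finsupp.ext (h0 m (MvPolynomial.mem_support_iff.mpr hc)))
      rw [hp, MvPolynomial.aeval_C] at hev
      rw [hp, hval (hev.trans (map_zero _).symm), map_zero]
    | succ n ih =>
      intro p hdeg hev
      have hpd : ∀ i, MvPolynomial.pderiv i p = 0 := by
        intro i
        refine ih _ ?_ (by rw [← hchain i p, hev, map_zero])
        refine Finset.sup_le fun m hm => ?_
        have hm' : (MvPolynomial.pderiv i p).coeff m ≠ 0 := MvPolynomial.mem_support_iff.mp hm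
        rw [Stmt19Aux.coeff_pderiv] at hm'
        have h2 : p.coeff (m + Finsupp.single i 1) ≠ 0 := by
          intro h; rw [h, smul_zero] at hm'; exact hm' rfl
        have h3 := MvPolynomial.le_totalDegree (MvPolynomial.mem_support_iff.mpr h2)
        have h4 : ((m + Finsupp.single i 1).sum fun _ e => e)
            = (m.sum fun _ e => e) + 1 := by
          rw [Finsupp.sum_add_index' (fun _ => rfl) (fun _ _ _ => rfl),
            Finsupp.sum_single_index rfl]
        omega
      have hcoeff : ∀ m : (Fin s) →₀ ℕ, m ≠ 0 → p.coeff m = 0 := by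
        intro m hm
        obtain ⟨i, hi⟩ : ∃ i, m i ≠ 0 := by
          by_contra h; push_neg at h; exact hm (Finsupp.ext h)
        have h1 := Stmt19Aux.coeff_pderiv i p (m - Finsupp.single i 1)
        rw [hpd i, MvPolynomial.coeff_zero] at h1
        have h2 : (m - Finsupp.single i 1) + Finsupp.single i 1 = m := by
          rw [tsub_add_cancel_of_le]
          rw [Finsupp.single_le_iff]
          omega
        rw [h2, nsmul_eq_mul] at h1
        have h3 : ((((m - Finsupp.single i 1 : Fin s →₀ ℕ) i + 1 : ℕ)) : ↥(integralClosure K A)) ≠ 0 :=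
          Nat.cast_ne_zero.mpr (Nat.succ_ne_zero _)
        rcases mul_eq_zero.mp h1.symm with h | h
        · exact absurd h h3
        · exact h
      have hp : p = MvPolynomial.C (p.coeff 0) := hCC p hcoeff
      rw [hp, MvPolynomial.aeval_C] at hev
      rw [hp, hval (hev.trans (map_zero _).symm), map_zero]
  refine ⟨hpart1, ?_, ?_⟩
  · rw [algebraicIndependent_iff]
    intro p hp
    exact hzero p.totalDegree p le_rfl hp
  · -- generation
    have hKmem : ∀ (r : K) (a : A), a ∈ Algebra.adjoin ↥(integralClosure K A) (Set.range x) →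
        r • a ∈ Algebra.adjoin ↥(integralClosure K A) (Set.range x) := by
      intro r a ha
      rw [Algebra.smul_def]
      refine mul_mem ?_ ha
      have h1 : (algebraMap K A r) ∈ integralClosure K A := isIntegral_algebraMap
      have h2 : algebraMap K A r = algebraMap ↥(integralClosure K A) A ⟨_, h1⟩ := rfl
      rw [h2]
      exact Subalgebra.algebraMap_mem _ _
    have hadj : ∀ (k : ℕ) (a : A), (∀ i : Fin s, k ≤ (i : ℕ) → δ i a = 0) →
        a ∈ Algebra.adjoin ↥(integralClosure K A) (Set.range x) := by
      intro k
      induction k with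
      | zero =>
        intro a ha
        have h1 : a ∈ integralClosure K A := hforward a (fun i => ha i (Nat.zero_le _))
        have h2 : a = algebraMap ↥(integralClosure K A) A ⟨a, h1⟩ := rfl
        rw [h2]
        exact Subalgebra.algebraMap_mem _ _
      | succ k ih =>
        intro a ha
        by_cases hks : k < s
        · set i0 : Fin s := ⟨k, hks⟩ with hi0
          obtain ⟨N, hN⟩ := hln i0 a
          rw [Stmt19Aux.dix_taylor (δ i0) (hleib i0) (hln i0) (x i0) (hxx i0) a hN]
          refine Subalgebra.sum_mem _ fun j _ => ?_
          refine hKmem _ _ ?_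
          refine mul_mem ?_ (pow_mem (Algebra.subset_adjoin (Set.mem_range_self i0)) j)
          refine ih _ fun i hik => ?_
          rcases Nat.lt_or_ge k (i : ℕ) with hlt | hge
          · have hne : i ≠ i0 := by
              intro he
              rw [he, hi0] at hlt
              exact absurd hlt (lt_irrefl k)
            rw [hΦcomm i0 i hne]
            have hcomm' : δ i (((δ i0) ^ j) a) = ((δ i0) ^ j) (δ i a) :=
              Stmt19Aux.E_pow_comm (δ i0) (δ i) (fun b => hcomm i i0 b) j a
            rw [hcomm', ha i (by omega), map_zero, map_zero]
          · have hii0 : i = i0 := by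
              apply Fin.ext
              have h5 : (i0 : ℕ) = k := rfl
              omega
            rw [hii0]
            exact hΦker i0 _
        · refine ih a fun i hik => ?_
          exact absurd hik (by have := i.isLt; omega)
    rw [eq_top_iff]
    intro a _
    exact hadj s a (fun i hi => absurd hi (by have := i.isLt; omega))
end
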